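/- arXiv:2111.02342 — 10 statements merged into one kernel-verified Lean document; each statement's English description precedes it below -/
import Mathlib

section
/- Suppose that for every k = 0,…,T−1 the (n+m)×L matrix obtained by stacking X(k) on top of U(k) has rank n+m. Then for every sequence of feedback gains K(k) ∈ ℝ^{m×n} (k = 0,…,T−1) there exists a matrix G(k) ∈ ℝ^{L×n} with X(k)G(k) = I_n and U(k)G(k) = K(k); moreover, for every G(k) satisfying these two identities one has A(k) + B(k)K(k) = X(k+1)G(k), so every trajectory of the closed-loop system x(k+1) = (A(k)+B(k)K(k))x(k) satisfies x(k+1) = X(k+1)G(k)x(k) for k = 0,…,T−1. -/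
open Matrix


lemma exists_right_solution {L n : ℕ} {ι : Type} [Fintype ι] [DecidableEq ι]
    (M : Matrix ι (Fin L) ℝ) (hM : M.rank = Fintype.card ι)
    (C : Matrix ι (Fin n) ℝ) :
    ∃ G : Matrix (Fin L) (Fin n) ℝ, M * G = C := by
  have hrange : LinearMap.range M.mulVecLin = ⊤ := by
    apply Submodule.eq_top_of_finrank_eq
    rw [show Module.finrank ℝ (LinearMap.range M.mulVecLin) = M.rank from rfl, hM,
      Module.finrank_fintype_fun_eq_card]
  have hsurj : Function.Surjective M.mulVec := by
    intro y
    obtain ⟨x, hx⟩ := (LinearMap.range_eq_top.mp hrange) y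
    exact ⟨x, hx⟩
  choose g hg using fun j : Fin n => hsurj (fun i => C i j)
  refine ⟨Matrix.of fun l j => g j l, ?_⟩
  ext i j
  have := congrFun (hg j) i
  simpa [Matrix.mul_apply, Matrix.mulVec, dotProduct] using this

/-- Data-driven representation of the closed-loop LTV system
(Corollary 1 of the paper). -/
theorem data_driven_closed_loop_representation
    {n m L T : ℕ}
    (A : ℕ → Matrix (Fin n) (Fin n) ℝ) (B : ℕ → Matrix (Fin n) (Fin m) ℝ)
    (X : ℕ → Matrix (Fin n) (Fin L) ℝ) (U : ℕ → Matrix (Fin m) (Fin L) ℝ)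
    (hdata : ∀ k < T, X (k + 1) = A k * X k + B k * U k)
    (hrank : ∀ k < T, (Matrix.fromRows (X k) (U k)).rank = n + m) :
    ∀ K : ℕ → Matrix (Fin m) (Fin n) ℝ,
      (∀ k < T, ∃ G : Matrix (Fin L) (Fin n) ℝ,
        X k * G = (1 : Matrix (Fin n) (Fin n) ℝ) ∧ U k * G = K k) ∧
      ∀ G : ℕ → Matrix (Fin L) (Fin n) ℝ,
        (∀ k < T, X k * G k = (1 : Matrix (Fin n) (Fin n) ℝ) ∧ U k * G k = K k) →
        (∀ k < T, A k + B k * K k = X (k + 1) * G k) ∧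
        ∀ x : ℕ → Fin n → ℝ,
          (∀ k < T, x (k + 1) = (A k + B k * K k).mulVec (x k)) →
          ∀ k < T, x (k + 1) = (X (k + 1) * G k).mulVec (x k) := by
  intro K
  constructor
  · intro k hk
    have hM : (Matrix.fromRows (X k) (U k)).rank = Fintype.card (Fin n ⊕ Fin m) := by
      simpa using hrank k hk
    obtain ⟨G, hG⟩ := exists_right_solution (Matrix.fromRows (X k) (U k)) hM
      (Matrix.fromRows (1 : Matrix (Fin n) (Fin n) ℝ) (K k))
    refine ⟨G, ?_, ?_⟩
    · ext i j; have := congrFun (congrFun hG (Sum.inl i)) j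
      simpa [Matrix.mul_apply, Matrix.fromRows_apply_inl, Matrix.fromRows_apply_inr] using this
    · ext i j; have := congrFun (congrFun hG (Sum.inr i)) j
      simpa [Matrix.mul_apply, Matrix.fromRows_apply_inl, Matrix.fromRows_apply_inr] using this
  · intro G hG
    have key : ∀ k < T, A k + B k * K k = X (k + 1) * G k := by
      intro k hk
      obtain ⟨h1, h2⟩ := hG k hk
      rw [hdata k hk, Matrix.add_mul, Matrix.mul_assoc, Matrix.mul_assoc, h1, h2,
        Matrix.mul_one]
    exact ⟨key, fun x hx k hk => by rw [hx k hk, key k hk]⟩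
end

section
/- Suppose the stacked data matrix [X(k); U(k)] has rank n+m for k = 0,…,T−1. Let η ≥ 1 and ρ > η be finite constants, and suppose Y(k) ∈ ℝ^{L×n} (k = 0,…,T−1) and symmetric P(k) ∈ ℝ^{n×n} (k = 0,…,T) satisfy: (i) the 2×2 block matrix [[P(k+1) − I_n, X(k+1)Y(k)], [Y(k)ᵀX(k+1)ᵀ, P(k)]] ⪰ 0 for k = 0,…,T−1; (ii) X(k)Y(k) = P(k) for k = 0,…,T−1; (iii) ηI_n ⪯ P(k) ⪯ ρI_n for k = 0,…,T. Then every trajectory of the closed-loop system x(k+1) = (A(k) + B(k)K(k))x(k) with K(k) = U(k)Y(k)P(k)^{−1}, k = 0,…,T−1, satisfies ‖x(k)‖ ≤ √(ρ/η)·(1 − 1/ρ)^{k/2}·‖x(0)‖ for k = 0,…,T. -/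
open Matrix

/-- Action of a real matrix on a Euclidean-space vector. -/
noncomputable def matVec {n m : ℕ} (M : Matrix (Fin n) (Fin m) ℝ)
    (v : EuclideanSpace ℝ (Fin m)) : EuclideanSpace ℝ (Fin n) :=
  (WithLp.equiv 2 (Fin n → ℝ)).symm (M.mulVec (fun i => v i))

/-- Cauchy–Schwarz for a real PSD matrix. -/
lemma psd_cauchy_schwarz {n : ℕ} {Pm : Matrix (Fin n) (Fin n) ℝ} (hP : Pm.PosSemidef)
    (a b : Fin n → ℝ) :
    (a ⬝ᵥ Pm *ᵥ b) ^ 2 ≤ (a ⬝ᵥ Pm *ᵥ a) * (b ⬝ᵥ Pm *ᵥ b) := by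
  have hPs : Pmᵀ = Pm := by
    have := hP.1
    rwa [Matrix.IsHermitian, conjTranspose_eq_transpose_of_trivial] at this
  have hsymm : ∀ u v : Fin n → ℝ, u ⬝ᵥ Pm *ᵥ v = v ⬝ᵥ Pm *ᵥ u := by
    intro u v
    rw [Matrix.dotProduct_mulVec, ← Matrix.mulVec_transpose, hPs, dotProduct_comm]
  have hquad : ∀ t : ℝ,
      0 ≤ (b ⬝ᵥ Pm *ᵥ b) * (t * t) + (2 * (a ⬝ᵥ Pm *ᵥ b)) * t + (a ⬝ᵥ Pm *ᵥ a) := by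
    intro t
    have h0 := hP.dotProduct_mulVec_nonneg (a + t • b)
    simp only [star_trivial] at h0
    have hexp : (a + t • b) ⬝ᵥ Pm *ᵥ (a + t • b)
        = (b ⬝ᵥ Pm *ᵥ b) * (t * t) + (2 * (a ⬝ᵥ Pm *ᵥ b)) * t + (a ⬝ᵥ Pm *ᵥ a) := by
      rw [Matrix.mulVec_add, Matrix.mulVec_smul, dotProduct_add, add_dotProduct,
        add_dotProduct, dotProduct_smul, smul_dotProduct,
        smul_dotProduct, dotProduct_smul, hsymm b a]
      simp [smul_eq_mul]
      ring
    rw [hexp] at h0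
    exact h0
  have hd := discrim_le_zero hquad
  rw [discrim] at hd
  nlinarith [hd]

lemma quad_nonneg {n : ℕ} {Pm : Matrix (Fin n) (Fin n) ℝ} (hP : Pm.PosSemidef)
    (u : Fin n → ℝ) : 0 ≤ u ⬝ᵥ Pm *ᵥ u := by
  have := hP.dotProduct_mulVec_nonneg u; simpa using this

lemma transpose_eq_of_posSemidef {n : ℕ} {Pm : Matrix (Fin n) (Fin n) ℝ}
    (hP : Pm.PosSemidef) : Pmᵀ = Pm := by
  have := hP.1
  rwa [Matrix.IsHermitian, conjTranspose_eq_transpose_of_trivial] at this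

lemma step_ineq {n : ℕ} {Pm Q M : Matrix (Fin n) (Fin n) ℝ}
    (hP : Pm.PosDef) (hQ : Q.PosDef) {c : ℝ} (hc : 0 ≤ c)
    (h : (c • Q - M * Pm * Mᵀ).PosSemidef) (u : Fin n → ℝ) :
    (M *ᵥ u) ⬝ᵥ Q⁻¹ *ᵥ (M *ᵥ u) ≤ c * (u ⬝ᵥ Pm⁻¹ *ᵥ u) := by
  have hPdet : IsUnit Pm.det := (Matrix.isUnit_iff_isUnit_det _).mp hP.isUnit
  have hQdet : IsUnit Q.det := (Matrix.isUnit_iff_isUnit_det _).mp hQ.isUnit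
  set w : Fin n → ℝ := Q⁻¹ *ᵥ (M *ᵥ u) with hw
  set s : ℝ := (M *ᵥ u) ⬝ᵥ w with hs
  have key1 : Q *ᵥ w = M *ᵥ u := by
    rw [hw, Matrix.mulVec_mulVec, Matrix.mul_nonsing_inv _ hQdet, Matrix.one_mulVec]
  have hsQ : s = w ⬝ᵥ Q *ᵥ w := by rw [key1, hs, dotProduct_comm]
  have hs0 : 0 ≤ s := hsQ ▸ quad_nonneg hQ.posSemidef w
  -- a := Mᵀ *ᵥ w, b := Pm⁻¹ *ᵥ u
  set a : Fin n → ℝ := Mᵀ *ᵥ w with ha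
  set b : Fin n → ℝ := Pm⁻¹ *ᵥ u with hb
  have hPb : Pm *ᵥ b = u := by
    rw [hb, Matrix.mulVec_mulVec, Matrix.mul_nonsing_inv _ hPdet, Matrix.one_mulVec]
  have hshift : ∀ v z : Fin n → ℝ, w ⬝ᵥ M *ᵥ z = (Mᵀ *ᵥ w) ⬝ᵥ z := by
    intro v z
    rw [Matrix.dotProduct_mulVec, ← Matrix.mulVec_transpose]
  have e1 : a ⬝ᵥ Pm *ᵥ b = s := by
    rw [hPb, ha, ← hshift u u, hs, dotProduct_comm]
  have e2 : b ⬝ᵥ Pm *ᵥ b = u ⬝ᵥ Pm⁻¹ *ᵥ u := by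
    rw [hPb, hb, dotProduct_comm]
  have hA : a ⬝ᵥ Pm *ᵥ a ≤ c * s := by
    have h2 := quad_nonneg h w
    have h1 : (M * Pm * Mᵀ) *ᵥ w = M *ᵥ (Pm *ᵥ (Mᵀ *ᵥ w)) := by
      simp [Matrix.mulVec_mulVec, Matrix.mul_assoc]
    have hMPMw : w ⬝ᵥ (M * Pm * Mᵀ) *ᵥ w = a ⬝ᵥ Pm *ᵥ a := by
      rw [h1, hshift w (Pm *ᵥ (Mᵀ *ᵥ w)), ← ha]
    have hexp : w ⬝ᵥ (c • Q - M * Pm * Mᵀ) *ᵥ w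
        = c * (w ⬝ᵥ Q *ᵥ w) - a ⬝ᵥ Pm *ᵥ a := by
      rw [Matrix.sub_mulVec, dotProduct_sub, Matrix.smul_mulVec,
        dotProduct_smul, smul_eq_mul, hMPMw]
    rw [hexp] at h2
    rw [← hsQ] at h2
    linarith
  have hp0 : 0 ≤ u ⬝ᵥ Pm⁻¹ *ᵥ u := e2 ▸ quad_nonneg hP.posSemidef b
  have hcs := psd_cauchy_schwarz hP.posSemidef a b
  rw [e1, e2] at hcs
  set p : ℝ := u ⬝ᵥ Pm⁻¹ *ᵥ u with hp
  have hfin : s ^ 2 ≤ (c * s) * p := le_trans hcs (mul_le_mul_of_nonneg_right hA hp0)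
  show s ≤ c * p
  by_contra h'
  push_neg at h'
  rcases eq_or_lt_of_le hs0 with h0 | h0
  · rw [← h0] at h'
    exact absurd (mul_nonneg hc hp0) (not_le.mpr h')
  · nlinarith [mul_lt_mul_of_pos_right h' h0]

lemma cs_id {n : ℕ} (a b : Fin n → ℝ) : (a ⬝ᵥ b) ^ 2 ≤ (a ⬝ᵥ a) * (b ⬝ᵥ b) := by
  have := psd_cauchy_schwarz (Matrix.PosDef.one (n := Fin n) (R := ℝ)).posSemidef a b
  simpa [Matrix.one_mulVec] using this

lemma dot_self_nonneg {n : ℕ} (a : Fin n → ℝ) : 0 ≤ a ⬝ᵥ a := by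
  have := quad_nonneg (Matrix.PosDef.one (n := Fin n) (R := ℝ)).posSemidef a
  simpa [Matrix.one_mulVec] using this

/-- If `η•1 ⪯ P` then `u ⬝ P⁻¹ u ≤ (1/η) u⬝u`. -/
lemma inv_quad_upper {n : ℕ} {Pm : Matrix (Fin n) (Fin n) ℝ} (hP : Pm.PosDef)
    {η : ℝ} (hη : 0 < η) (hlow : (Pm - η • 1).PosSemidef) (u : Fin n → ℝ) :
    u ⬝ᵥ Pm⁻¹ *ᵥ u ≤ (1 / η) * (u ⬝ᵥ u) := by
  have hPdet : IsUnit Pm.det := (Matrix.isUnit_iff_isUnit_det _).mp hP.isUnit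
  set v : Fin n → ℝ := Pm⁻¹ *ᵥ u with hv
  have hu : Pm *ᵥ v = u := by
    rw [hv, Matrix.mulVec_mulVec, Matrix.mul_nonsing_inv _ hPdet, Matrix.one_mulVec]
  have ht : u ⬝ᵥ Pm⁻¹ *ᵥ u = v ⬝ᵥ Pm *ᵥ v := by
    rw [← hv, hu, dotProduct_comm]
  set t : ℝ := v ⬝ᵥ Pm *ᵥ v with htt
  have ht0 : 0 ≤ t := quad_nonneg hP.posSemidef v
  have hvv : η * (v ⬝ᵥ v) ≤ t := by
    have h2 := quad_nonneg hlow v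
    have : v ⬝ᵥ (Pm - η • 1) *ᵥ v = t - η * (v ⬝ᵥ v) := by
      rw [Matrix.sub_mulVec, dotProduct_sub, Matrix.smul_mulVec,
        Matrix.one_mulVec, dotProduct_smul, smul_eq_mul]
    rw [this] at h2; linarith
  have hcs : t ^ 2 ≤ (v ⬝ᵥ v) * (u ⬝ᵥ u) := by
    have := cs_id v u
    rwa [show v ⬝ᵥ u = t by rw [← hu]] at this
  rw [ht]
  rcases eq_or_lt_of_le ht0 with h0 | h0
  · rw [← h0]
    exact mul_nonneg (by positivity) (dot_self_nonneg u)
  · -- t^2 ≤ (t/η)*(u⬝u)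
    have hvv' : v ⬝ᵥ v ≤ t / η := by rw [le_div_iff₀ hη]; linarith
    have : t ^ 2 ≤ (t / η) * (u ⬝ᵥ u) :=
      le_trans hcs (mul_le_mul_of_nonneg_right hvv' (dot_self_nonneg u))
    rw [div_mul_eq_mul_div, le_div_iff₀ hη] at this
    have h3 : t * η ≤ u ⬝ᵥ u := by nlinarith
    rw [← le_div_iff₀ hη] at h3
    calc t ≤ (u ⬝ᵥ u) / η := h3
    _ = 1 / η * (u ⬝ᵥ u) := by ring

/-- If `P ⪯ ρ•1` then `(1/ρ) u⬝u ≤ u ⬝ P⁻¹ u`. -/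
lemma inv_quad_lower {n : ℕ} {Pm : Matrix (Fin n) (Fin n) ℝ} (hP : Pm.PosDef)
    {ρ : ℝ} (hρ : 0 < ρ) (hhigh : (ρ • 1 - Pm).PosSemidef) (u : Fin n → ℝ) :
    (1 / ρ) * (u ⬝ᵥ u) ≤ u ⬝ᵥ Pm⁻¹ *ᵥ u := by
  have hPdet : IsUnit Pm.det := (Matrix.isUnit_iff_isUnit_det _).mp hP.isUnit
  have hPs : Pmᵀ = Pm := transpose_eq_of_posSemidef hP.posSemidef
  set v : Fin n → ℝ := Pm⁻¹ *ᵥ u with hv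
  have hu : Pm *ᵥ v = u := by
    rw [hv, Matrix.mulVec_mulVec, Matrix.mul_nonsing_inv _ hPdet, Matrix.one_mulVec]
  have ht : u ⬝ᵥ Pm⁻¹ *ᵥ u = v ⬝ᵥ Pm *ᵥ v := by
    rw [← hv, hu, dotProduct_comm]
  set t : ℝ := v ⬝ᵥ Pm *ᵥ v with htt
  have ht0 : 0 ≤ t := quad_nonneg hP.posSemidef v
  set d : ℝ := u ⬝ᵥ u with hd
  have hd0 : 0 ≤ d := dot_self_nonneg u
  -- CS wrt Pm with a = v, b = u = Pm v
  have hcs := psd_cauchy_schwarz hP.posSemidef v u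
  have hvPu : v ⬝ᵥ Pm *ᵥ u = d := by
    rw [Matrix.dotProduct_mulVec, ← Matrix.mulVec_transpose, hPs, hu, hd]
  have hub : u ⬝ᵥ Pm *ᵥ u ≤ ρ * d := by
    have h2 := quad_nonneg hhigh u
    have : u ⬝ᵥ (ρ • 1 - Pm) *ᵥ u = ρ * d - u ⬝ᵥ Pm *ᵥ u := by
      rw [Matrix.sub_mulVec, dotProduct_sub, Matrix.smul_mulVec,
        Matrix.one_mulVec, dotProduct_smul, smul_eq_mul, hd]
    rw [this] at h2; linarith
  rw [hvPu, ← htt] at hcs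
  -- d^2 ≤ t * (ρ * d)
  have hfin : d ^ 2 ≤ t * (ρ * d) :=
    le_trans hcs (mul_le_mul_of_nonneg_left hub ht0)
  rw [ht]
  rcases eq_or_lt_of_le hd0 with h0 | h0
  · rw [← h0]; simpa using ht0
  · have : d ≤ ρ * t := by nlinarith
    rw [div_mul_eq_mul_div, one_mul, div_le_iff₀ hρ]
    linarith [mul_comm t ρ]


/-- Bounded closed-loop trajectories via data-dependent LMIs
(Theorem 1 of the paper). -/
theorem bounded_trajectories_via_data_LMIs
    {n m L T : ℕ}
    (A : ℕ → Matrix (Fin n) (Fin n) ℝ) (B : ℕ → Matrix (Fin n) (Fin m) ℝ)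
    (X : ℕ → Matrix (Fin n) (Fin L) ℝ) (U : ℕ → Matrix (Fin m) (Fin L) ℝ)
    (hdata : ∀ k < T, X (k + 1) = A k * X k + B k * U k)
    (hrank : ∀ k < T, (Matrix.fromRows (X k) (U k)).rank = n + m)
    (η ρ : ℝ) (hη : 1 ≤ η) (hρ : η < ρ)
    (Y : ℕ → Matrix (Fin L) (Fin n) ℝ) (P : ℕ → Matrix (Fin n) (Fin n) ℝ)
    (hPsymm : ∀ k ≤ T, (P k).IsSymm)
    (hLMI : ∀ k < T,
      (Matrix.fromBlocks (P (k + 1) - 1) (X (k + 1) * Y k)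
        ((Y k)ᵀ * (X (k + 1))ᵀ) (P k)).PosSemidef)
    (heq : ∀ k < T, X k * Y k = P k)
    (hPlow : ∀ k ≤ T, (P k - η • (1 : Matrix (Fin n) (Fin n) ℝ)).PosSemidef)
    (hPhigh : ∀ k ≤ T, (ρ • (1 : Matrix (Fin n) (Fin n) ℝ) - P k).PosSemidef) :
    ∀ x : ℕ → EuclideanSpace ℝ (Fin n),
      (∀ k < T, x (k + 1) = matVec (A k + B k * (U k * Y k * (P k)⁻¹)) (x k)) →
      ∀ k ≤ T, ‖x k‖ ≤ Real.sqrt (ρ / η) * Real.sqrt ((1 - 1 / ρ) ^ k) * ‖x 0‖ := by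
  intro x hx
  have hη0 : (0 : ℝ) < η := lt_of_lt_of_le one_pos hη
  have hρ1 : (1 : ℝ) < ρ := lt_of_le_of_lt hη hρ
  have hρ0 : (0 : ℝ) < ρ := lt_trans one_pos hρ1
  set c : ℝ := 1 - 1 / ρ with hc
  have hc0 : 0 ≤ c := by
    rw [hc]; have : 1 / ρ ≤ 1 := by rw [div_le_one hρ0]; linarith
    linarith
  have hsm : (η • (1 : Matrix (Fin n) (Fin n) ℝ)).PosDef := by
    refine Matrix.PosDef.of_dotProduct_mulVec_pos ?_ ?_
    · rw [Matrix.IsHermitian, conjTranspose_eq_transpose_of_trivial, Matrix.transpose_smul,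
        Matrix.transpose_one]
    · intro z hz
      have h1 : star z ⬝ᵥ (η • (1 : Matrix (Fin n) (Fin n) ℝ)) *ᵥ z = η * (star z ⬝ᵥ z) := by
        rw [Matrix.smul_mulVec, Matrix.one_mulVec, dotProduct_smul, smul_eq_mul]
      rw [h1]
      exact mul_pos hη0 (Matrix.dotProduct_star_self_pos_iff.mpr hz)
  -- positive definiteness of P k
  have hPd : ∀ k ≤ T, (P k).PosDef := by
    intro k hk
    have h2 := Matrix.PosDef.posSemidef_add (hPlow k hk) hsm
    rwa [sub_add_cancel] at h2
  -- the Lyapunov-type quadratic function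
  set v : ℕ → (Fin n → ℝ) := fun k i => x k i with hvdef
  set Vf : ℕ → ℝ := fun k => v k ⬝ᵥ (P k)⁻¹ *ᵥ v k with hVdef
  -- one-step decrease
  have hstep : ∀ k < T, Vf (k + 1) ≤ c * Vf k := by
    intro k hk
    set M : Matrix (Fin n) (Fin n) ℝ := A k + B k * (U k * Y k * (P k)⁻¹) with hM
    have hxk1 : v (k + 1) = M *ᵥ v k := by
      funext i
      show x (k+1) i = _
      rw [hx k hk]
      rfl
    have hPdk := hPd k (le_of_lt hk)
    have hPdk1 := hPd (k + 1) hk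
    have hPdet : IsUnit (P k).det := (Matrix.isUnit_iff_isUnit_det _).mp hPdk.isUnit
    have hPs : (P k)ᵀ = P k := transpose_eq_of_posSemidef hPdk.posSemidef
    -- closed-loop identity M * P k = X (k+1) * Y k
    have hMP : M * P k = X (k + 1) * Y k := by
      rw [hM, Matrix.add_mul, Matrix.mul_assoc (B k) _ (P k), Matrix.mul_assoc _ ((P k)⁻¹) (P k),
        Matrix.nonsing_inv_mul _ hPdet, Matrix.mul_one, hdata k hk, ← heq k hk,
        Matrix.add_mul, Matrix.mul_assoc, Matrix.mul_assoc]
    -- Schur complement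
    haveI := hPdk.isUnit.invertible
    have hblk := hLMI k hk
    have hct : ((X (k + 1)) * Y k)ᴴ = (Y k)ᵀ * (X (k + 1))ᵀ := by
      rw [conjTranspose_eq_transpose_of_trivial, Matrix.transpose_mul]
    rw [← hct] at hblk
    have hschur := (Matrix.PosDef.fromBlocks₂₂ _ _ hPdk).mp hblk
    rw [← hMP] at hschur
    have hsimp : M * P k * (P k)⁻¹ * (M * P k)ᴴ = M * P k * Mᵀ := by
      rw [conjTranspose_eq_transpose_of_trivial, Matrix.transpose_mul, hPs,
        Matrix.mul_assoc (M * P k) _ _, ← Matrix.mul_assoc ((P k)⁻¹) _ _,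
        Matrix.nonsing_inv_mul _ hPdet, Matrix.one_mul]
    rw [hsimp] at hschur
    -- build (c • P (k+1) - M * P k * Mᵀ).PosSemidef
    have hsm2 : ((1 / ρ) • (ρ • (1 : Matrix (Fin n) (Fin n) ℝ) - P (k + 1))).PosSemidef := by
      have h3 := hPhigh (k + 1) hk
      refine Matrix.PosSemidef.of_dotProduct_mulVec_nonneg ?_ ?_
      · rw [Matrix.IsHermitian, conjTranspose_eq_transpose_of_trivial, Matrix.transpose_smul,
          transpose_eq_of_posSemidef h3]
      · intro z
        have h4 : star z ⬝ᵥ ((1 / ρ) • (ρ • (1 : Matrix (Fin n) (Fin n) ℝ) - P (k + 1))) *ᵥ z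
            = (1 / ρ) * (star z ⬝ᵥ (ρ • (1 : Matrix (Fin n) (Fin n) ℝ) - P (k + 1)) *ᵥ z) := by
          rw [Matrix.smul_mulVec, dotProduct_smul, smul_eq_mul]
        rw [h4]
        exact mul_nonneg (by positivity) (h3.dotProduct_mulVec_nonneg z)
    have hdecomp : c • P (k + 1) - M * P k * Mᵀ
        = (P (k + 1) - 1 - M * P k * Mᵀ) + (1 / ρ) • (ρ • (1 : Matrix (Fin n) (Fin n) ℝ) - P (k + 1)) := by
      have h5 : (1 / ρ) * ρ = 1 := by field_simp
      rw [smul_sub, smul_smul, h5, one_smul, hc, sub_smul, one_smul]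
      abel
    have hpsd : (c • P (k + 1) - M * P k * Mᵀ).PosSemidef := by
      rw [hdecomp]
      exact hschur.add hsm2
    have hsi := step_ineq hPdk hPdk1 hc0 hpsd (v k)
    show v (k + 1) ⬝ᵥ (P (k + 1))⁻¹ *ᵥ v (k + 1) ≤ c * (v k ⬝ᵥ (P k)⁻¹ *ᵥ v k)
    rw [hxk1]
    exact hsi
  -- induction: Vf k ≤ c^k * Vf 0
  have hVnn : ∀ k ≤ T, 0 ≤ Vf k := by
    intro k hk
    exact quad_nonneg ((hPd k hk).inv).posSemidef (v k)
  have hind : ∀ k ≤ T, Vf k ≤ c ^ k * Vf 0 := by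
    intro k
    induction k with
    | zero => intro _; simp
    | succ k ih =>
      intro hk1
      have hkT : k < T := lt_of_lt_of_le (Nat.lt_succ_self k) hk1
      calc Vf (k + 1) ≤ c * Vf k := hstep k hkT
        _ ≤ c * (c ^ k * Vf 0) := mul_le_mul_of_nonneg_left (ih (le_of_lt hkT)) hc0
        _ = c ^ (k + 1) * Vf 0 := by ring
  -- norms
  have hnorm : ∀ j : ℕ, ‖x j‖ ^ 2 = v j ⬝ᵥ v j := by
    intro j
    rw [EuclideanSpace.norm_eq, Real.sq_sqrt (by positivity)]
    simp [dotProduct, Real.norm_eq_abs, sq_abs, pow_two]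
    rfl
  intro k hk
  have hl := inv_quad_lower (hPd k hk) hρ0 (hPhigh k hk) (v k)
  have hu := inv_quad_upper (hPd 0 (Nat.zero_le T)) hη0 (hPlow 0 (Nat.zero_le T)) (v 0)
  have hchain : (1 / ρ) * (v k ⬝ᵥ v k) ≤ c ^ k * ((1 / η) * (v 0 ⬝ᵥ v 0)) := by
    calc (1 / ρ) * (v k ⬝ᵥ v k) ≤ Vf k := hl
      _ ≤ c ^ k * Vf 0 := hind k hk
      _ ≤ c ^ k * ((1 / η) * (v 0 ⬝ᵥ v 0)) :=
          mul_le_mul_of_nonneg_left hu (pow_nonneg hc0 k)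
  have h2 : ‖x k‖ ^ 2 ≤ (ρ / η) * c ^ k * ‖x 0‖ ^ 2 := by
    rw [hnorm k, hnorm 0]
    have := mul_le_mul_of_nonneg_left hchain (le_of_lt hρ0)
    calc v k ⬝ᵥ v k = ρ * ((1 / ρ) * (v k ⬝ᵥ v k)) := by field_simp
      _ ≤ ρ * (c ^ k * ((1 / η) * (v 0 ⬝ᵥ v 0))) := this
      _ = (ρ / η) * c ^ k * (v 0 ⬝ᵥ v 0) := by field_simp
  calc ‖x k‖ = Real.sqrt (‖x k‖ ^ 2) := (Real.sqrt_sq (norm_nonneg _)).symm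
    _ ≤ Real.sqrt ((ρ / η) * c ^ k * ‖x 0‖ ^ 2) := Real.sqrt_le_sqrt h2
    _ = Real.sqrt (ρ / η) * Real.sqrt (c ^ k) * ‖x 0‖ := by
        rw [Real.sqrt_mul (mul_nonneg (le_of_lt (div_pos hρ0 hη0)) (pow_nonneg hc0 k)),
          Real.sqrt_mul (le_of_lt (div_pos hρ0 hη0)), Real.sqrt_sq (norm_nonneg _)]
end

section
/- Let A_cl(k) ∈ ℝ^{n×n} for k = 0,…,T−1 and let S_t(k,j) = A_cl(k−1)A_cl(k−2)⋯A_cl(j) for j < k and S_t(k,k) = I_n denote the associated state transition matrix. Suppose there exist finite constants η ≥ 1 and ρ > η and symmetric matrices P(k) ∈ ℝ^{n×n} with ηI_n ⪯ P(k) ⪯ ρI_n for k = 0,…,T, such that A_cl(k)P(k)A_cl(k)ᵀ − P(k+1) + I_n ⪯ 0 for k = 0,…,T−1. Then ‖S_t(k,j)‖² ≤ (ρ/η)·(1 − 1/ρ)^{k−j} for all 0 ≤ j ≤ k ≤ T; in particular, every trajectory of x(k+1) = A_cl(k)x(k) satisfies ‖x(k)‖ ≤ √(ρ/η)·(1 −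 1/ρ)^{(k−j)/2}·‖x(j)‖ for all 0 ≤ j ≤ k ≤ T. -/
open Matrix
open scoped Matrix.Norms.L2Operator

/-- Induced 2-norm (operator norm) of a real matrix. -/
noncomputable def opNorm2 {n m : ℕ} (M : Matrix (Fin n) (Fin m) ℝ) : ℝ :=
  ‖LinearMap.toContinuousLinearMap (Matrix.toEuclideanLin M)‖

/-- State transition matrix `S_t(k, j) = A_cl(k-1) ⋯ A_cl(j)` for `j < k`,
and `S_t(j, j) = I_n` (also `1` for `k ≤ j`). Here `St Acl j k = S_t(k, j)`. -/
noncomputable def St {n : ℕ} (Acl : ℕ → Matrix (Fin n) (Fin n) ℝ) (j : ℕ) :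
    ℕ → Matrix (Fin n) (Fin n) ℝ
  | 0 => 1
  | k + 1 => if k + 1 ≤ j then 1 else Acl k * St Acl j k

lemma St_self {n : ℕ} (Acl : ℕ → Matrix (Fin n) (Fin n) ℝ) (j : ℕ) :
    St Acl j j = 1 := by
  cases j with
  | zero => rfl
  | succ m => simp [St]

lemma St_succ_of_le {n : ℕ} (Acl : ℕ → Matrix (Fin n) (Fin n) ℝ) {j k : ℕ} (h : j ≤ k) :
    St Acl j (k + 1) = Acl k * St Acl j k := by
  simp only [St]
  rw [if_neg (by omega)]

lemma psd_smul {n : ℕ} {c : ℝ} (hc : 0 ≤ c) {M : Matrix (Fin n) (Fin n) ℝ}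
    (hM : M.PosSemidef) : (c • M).PosSemidef := by
  refine .of_dotProduct_mulVec_nonneg ?_ fun x => ?_
  · have h1 := hM.1
    unfold Matrix.IsHermitian at *
    rw [Matrix.conjTranspose_smul, h1]
    norm_num
  · rw [Matrix.smul_mulVec, dotProduct_smul, smul_eq_mul]
    exact mul_nonneg hc (hM.dotProduct_mulVec_nonneg x)

lemma euclid_norm_sq {n : ℕ} (w : EuclideanSpace ℝ (Fin n)) :
    ‖w‖ ^ 2 = (fun i => w i) ⬝ᵥ (fun i => w i) := by
  rw [EuclideanSpace.norm_eq, Real.sq_sqrt (by positivity)]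
  simp [dotProduct, Real.norm_eq_abs, sq_abs, pow_two]

lemma opNorm2_le_sqrt {n : ℕ} (N : Matrix (Fin n) (Fin n) ℝ) {a : ℝ}
    (h : ((a • (1 : Matrix (Fin n) (Fin n) ℝ)) - Nᵀ * N).PosSemidef) :
    opNorm2 N ≤ Real.sqrt a := by
  refine ContinuousLinearMap.opNorm_le_bound _ (Real.sqrt_nonneg a) fun x => ?_
  have key : ∀ v : Fin n → ℝ, (N *ᵥ v) ⬝ᵥ (N *ᵥ v) ≤ a * (v ⬝ᵥ v) := by
    intro v
    have h2 := h.dotProduct_mulVec_nonneg v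
    simp only [star_trivial, Matrix.sub_mulVec, Matrix.smul_mulVec, Matrix.one_mulVec,
      dotProduct_sub, dotProduct_smul, smul_eq_mul,
      ← Matrix.mulVec_mulVec, Matrix.dotProduct_mulVec (v := v), Matrix.vecMul_transpose] at h2
    linarith
  have hx : ‖(LinearMap.toContinuousLinearMap (Matrix.toEuclideanLin N)) x‖ ^ 2
      ≤ a * ‖x‖ ^ 2 := by
    rw [euclid_norm_sq, euclid_norm_sq]
    exact key (fun i => x i)
  calc ‖(LinearMap.toContinuousLinearMap (Matrix.toEuclideanLin N)) x‖
      = Real.sqrt (‖(LinearMap.toContinuousLinearMap (Matrix.toEuclideanLin N)) x‖ ^ 2) :=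
        (Real.sqrt_sq (norm_nonneg _)).symm
    _ ≤ Real.sqrt (a * ‖x‖ ^ 2) := Real.sqrt_le_sqrt hx
    _ = Real.sqrt a * ‖x‖ := by
        rw [Real.sqrt_mul' _ (by positivity), Real.sqrt_sq (norm_nonneg _)]

lemma opNorm2_nonneg {n m : ℕ} (M : Matrix (Fin n) (Fin m) ℝ) : 0 ≤ opNorm2 M := by
  unfold opNorm2; exact norm_nonneg _

/-- decay bound for the state transition matrix and for closed-loop
trajectories (core estimate in the proof of Theorem 1 of the paper). -/
theorem transition_matrix_decay_bound
    {n T : ℕ}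
    (Acl : ℕ → Matrix (Fin n) (Fin n) ℝ)
    (η ρ : ℝ) (hη : 1 ≤ η) (hρ : η < ρ)
    (P : ℕ → Matrix (Fin n) (Fin n) ℝ)
    (hPsymm : ∀ k ≤ T, (P k).IsSymm)
    (hPlow : ∀ k ≤ T, (P k - η • (1 : Matrix (Fin n) (Fin n) ℝ)).PosSemidef)
    (hPhigh : ∀ k ≤ T, (ρ • (1 : Matrix (Fin n) (Fin n) ℝ) - P k).PosSemidef)
    (hLyap : ∀ k < T, (P (k + 1) - 1 - Acl k * P k * (Acl k)ᵀ).PosSemidef) :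
    (∀ j k : ℕ, j ≤ k → k ≤ T →
      opNorm2 (St Acl j k) ^ 2 ≤ ρ / η * (1 - 1 / ρ) ^ (k - j)) ∧
    ∀ x : ℕ → EuclideanSpace ℝ (Fin n),
      (∀ i < T, x (i + 1) = matVec (Acl i) (x i)) →
      ∀ j k : ℕ, j ≤ k → k ≤ T →
        ‖x k‖ ≤ Real.sqrt (ρ / η) * Real.sqrt ((1 - 1 / ρ) ^ (k - j)) * ‖x j‖ := by
  have hη0 : (0:ℝ) < η := lt_of_lt_of_le one_pos hη
  have hρ1 : (1:ℝ) < ρ := lt_of_le_of_lt hη hρ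
  have hρ0 : (0:ℝ) < ρ := lt_trans one_pos hρ1
  have hc1 : (0:ℝ) ≤ 1 - 1/ρ := by
    have : 1/ρ ≤ 1 := by rw [div_le_one hρ0]; linarith
    linarith
  have hcpow : ∀ m : ℕ, (0:ℝ) ≤ (1 - 1/ρ)^m := fun m => pow_nonneg hc1 m
  -- Main Lyapunov induction
  have main : ∀ j k : ℕ, j ≤ k → k ≤ T →
      ((1 - 1/ρ)^(k - j) • P k
        - St Acl j k * P j * (St Acl j k)ᵀ).PosSemidef := by
    intro j k hjk
    induction k, hjk using Nat.le_induction with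
    | base =>
      intro _
      simp only [Nat.sub_self, pow_zero, one_smul, St_self, Matrix.transpose_one,
        Matrix.one_mul, Matrix.mul_one, sub_self]
      exact Matrix.PosSemidef.zero
    | succ k hjk IH =>
      intro hk1T
      have hkT' : k < T := Nat.lt_of_succ_le hk1T
      set S := St Acl j k with hSdef
      set c : ℝ := (1 - 1/ρ)^(k - j) with hcdef
      have h1 : (Acl k * (c • P k - S * P j * Sᵀ) * (Acl k)ᵀ).PosSemidef :=
        (IH (le_of_lt hkT')).mul_mul_conjTranspose_same (Acl k)
      have h2 : (c • (P (k+1) - 1 - Acl k * P k * (Acl k)ᵀ)).PosSemidef :=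
        psd_smul (hcpow _) (hLyap k hkT')
      have h3 : (c • ((1/ρ) • (ρ • (1 : Matrix (Fin n) (Fin n) ℝ) - P (k+1)))).PosSemidef :=
        psd_smul (hcpow _) (psd_smul (by positivity) (hPhigh (k+1) hk1T))
      have hsum := (h1.add h2).add h3
      have hgoal_eq : (1 - 1/ρ)^(k + 1 - j) • P (k+1)
          - St Acl j (k+1) * P j * (St Acl j (k+1))ᵀ
          = Acl k * (c • P k - S * P j * Sᵀ) * (Acl k)ᵀ
            + c • (P (k+1) - 1 - Acl k * P k * (Acl k)ᵀ)
            + c • ((1/ρ) • (ρ • (1 : Matrix (Fin n) (Fin n) ℝ) - P (k+1))) := by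
        rw [St_succ_of_le Acl hjk, show k + 1 - j = (k - j) + 1 by omega, pow_succ, ← hcdef,
          smul_sub ((1:ℝ)/ρ) ((ρ:ℝ) • (1 : Matrix (Fin n) (Fin n) ℝ)) (P (k+1)),
          smul_smul ((1:ℝ)/ρ) ρ, one_div_mul_cancel (ne_of_gt hρ0), one_smul]
        simp only [Matrix.mul_sub, Matrix.sub_mul, Matrix.mul_smul, Matrix.smul_mul,
          Matrix.transpose_mul, Matrix.mul_assoc, smul_sub, smul_smul]
        module
      rw [hgoal_eq]
      exact hsum
  -- Norm bound from the Lyapunov estimate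
  have hnorm : ∀ j k : ℕ, j ≤ k → k ≤ T →
      opNorm2 (St Acl j k) ≤ Real.sqrt (ρ/η * (1 - 1/ρ)^(k - j)) := by
    intro j k hjk hkT
    set S := St Acl j k with hSdef
    set c : ℝ := (1 - 1/ρ)^(k - j) with hcdef
    have h4 : (S * (P j - η • (1 : Matrix (Fin n) (Fin n) ℝ)) * Sᵀ).PosSemidef :=
      (hPlow j (hjk.trans hkT)).mul_mul_conjTranspose_same S
    have h5 : (c • (ρ • (1 : Matrix (Fin n) (Fin n) ℝ) - P k)).PosSemidef :=
      psd_smul (hcpow _) (hPhigh k hkT)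
    have hsum := ((main j k hjk hkT).add h4).add h5
    have heq : (1 - 1/ρ)^(k - j) • P k - S * P j * Sᵀ
        + S * (P j - η • (1 : Matrix (Fin n) (Fin n) ℝ)) * Sᵀ
        + c • (ρ • (1 : Matrix (Fin n) (Fin n) ℝ) - P k)
        = (c * ρ) • (1 : Matrix (Fin n) (Fin n) ℝ) - η • (S * Sᵀ) := by
      rw [← hcdef]
      simp only [Matrix.mul_sub, Matrix.sub_mul, Matrix.mul_smul, Matrix.smul_mul,
        Matrix.mul_one, Matrix.mul_assoc, smul_sub, smul_smul]
      module
    rw [heq] at hsum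
    have hsum2 := psd_smul (le_of_lt (by positivity : (0:ℝ) < 1/η)) hsum
    have heq2 : (1/η) • ((c * ρ) • (1 : Matrix (Fin n) (Fin n) ℝ) - η • (S * Sᵀ))
        = (ρ/η * c) • (1 : Matrix (Fin n) (Fin n) ℝ) - Sᵀᵀ * Sᵀ := by
      rw [smul_sub, smul_smul, smul_smul, one_div_mul_cancel (ne_of_gt hη0), one_smul,
        Matrix.transpose_transpose, show (1/η) * (c * ρ) = ρ/η * c from by ring]
    rw [heq2] at hsum2
    have hb := opNorm2_le_sqrt Sᵀ hsum2
    calc opNorm2 S = opNorm2 Sᵀ := (Matrix.l2_opNorm_conjTranspose S).symm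
      _ ≤ Real.sqrt (ρ/η * c) := hb
  have ha : ∀ j k : ℕ, (0:ℝ) ≤ ρ/η * (1 - 1/ρ)^(k - j) := fun j k =>
    mul_nonneg (div_nonneg (le_of_lt hρ0) (le_of_lt hη0)) (hcpow _)
  constructor
  · intro j k hjk hkT
    calc opNorm2 (St Acl j k) ^ 2 ≤ Real.sqrt (ρ/η * (1 - 1/ρ)^(k - j)) ^ 2 :=
          pow_le_pow_left₀ (opNorm2_nonneg _) (hnorm j k hjk hkT) 2
      _ = ρ/η * (1 - 1/ρ)^(k - j) := Real.sq_sqrt (ha j k)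
  · intro x hx j k hjk hkT
    -- trajectory formula
    have traj : ∀ k : ℕ, j ≤ k → k ≤ T → x k = matVec (St Acl j k) (x j) := by
      intro k hjk
      induction k, hjk using Nat.le_induction with
      | base =>
        intro _
        rw [St_self]
        simp only [matVec, Matrix.one_mulVec]
        rfl
      | succ k hjk IH =>
        intro hk1T
        have hkT' : k < T := Nat.lt_of_succ_le hk1T
        rw [hx k hkT', IH (le_of_lt hkT'), St_succ_of_le Acl hjk]
        simp [matVec, Matrix.mulVec_mulVec]
    rw [traj k hjk hkT]
    have hle : ‖matVec (St Acl j k) (x j)‖ ≤ opNorm2 (St Acl j k) * ‖x j‖ :=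
      (LinearMap.toContinuousLinearMap (Matrix.toEuclideanLin (St Acl j k))).le_opNorm (x j)
    have hsplit : Real.sqrt (ρ/η * (1 - 1/ρ)^(k - j))
        = Real.sqrt (ρ/η) * Real.sqrt ((1 - 1/ρ)^(k - j)) :=
      Real.sqrt_mul (div_nonneg (le_of_lt hρ0) (le_of_lt hη0)) _
    calc ‖matVec (St Acl j k) (x j)‖ ≤ opNorm2 (St Acl j k) * ‖x j‖ := hle
      _ ≤ Real.sqrt (ρ/η * (1 - 1/ρ)^(k - j)) * ‖x j‖ :=
          mul_le_mul_of_nonneg_right (hnorm j k hjk hkT) (norm_nonneg _)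
      _ = Real.sqrt (ρ/η) * Real.sqrt ((1 - 1/ρ)^(k - j)) * ‖x j‖ := by rw [hsplit]
end

section
/- Suppose rank[X_i(k); U_i(k)] = n+m for all k = T_{i−1},…,T_i−1 and all i = 1,…,N_i (with T_0 = 0). Then for every sequence of gains K(k) ∈ ℝ^{m×n} (k = 0,…,T−1) there exist matrices G(k) ∈ ℝ^{L×n} satisfying X_i(k)G(k) = I_n and U_i(k)G(k) = K(k) for k = T_{i−1},…,T_i−1 and i = 1,…,N_i; moreover, for any such G(k), A(k) + B(k)K(k) = X_i(k+1)G(k) for k = T_{i−1},…,T_i−1, so every closed-loop trajectory satisfies x(k+1) = X_i(k+1)G(k)x(k) on the i-th subinterval. -/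
/-!
The rank condition makes the stacked data matrix `[X_i(k); U_i(k)]` surjective, so any prescribed
block `[I; K(k)]` is reached by some `G(k)`. For such a `G(k)`, the data equation
`X_i(k+1) = A(k) X_i(k) + B(k) U_i(k)` multiplied on the right by `G(k)` yields
`X_i(k+1) G(k) = A(k) + B(k) K(k)`.
-/

open Matrix

theorem Nat.apply_le_apply_of_forall_le_succ {β : Type*} [Preorder β] {f : ℕ → β} {N : ℕ}
    (hf : ∀ i < N, f i ≤ f (i + 1)) {i : ℕ} (hi : i ≤ N) : f i ≤ f N := by
  induction N, hi using Nat.le_induction with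
  | base => exact le_rfl
  | succ N _ ih => exact (ih fun j hj => hf j (by omega)).trans (hf N N.lt_succ_self)

namespace Matrix

variable {𝕜 ι ι₁ ι₂ κ ν : Type*} [Field 𝕜] [Fintype κ]

theorem exists_mul_eq_one_of_rank_eq_card [Fintype ι] [DecidableEq ι] {M : Matrix ι κ 𝕜}
    (h : M.rank = Fintype.card ι) : ∃ G : Matrix κ ι 𝕜, M * G = 1 := by
  rw [← mulVec_surjective_iff_exists_right_inverse, ← coe_mulVecLin, ← LinearMap.range_eq_top]
  apply Submodule.eq_top_of_finrank_eq
  rw [← rank, h, Module.finrank_fintype_fun_eq_card]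

theorem exists_mul_eq_and_mul_eq_of_rank_fromRows [Fintype ι₁] [Fintype ι₂]
    [DecidableEq ι₁] [DecidableEq ι₂] {X : Matrix ι₁ κ 𝕜} {U : Matrix ι₂ κ 𝕜}
    (h : (fromRows X U).rank = Fintype.card ι₁ + Fintype.card ι₂)
    (X₀ : Matrix ι₁ ν 𝕜) (U₀ : Matrix ι₂ ν 𝕜) :
    ∃ G : Matrix κ ν 𝕜, X * G = X₀ ∧ U * G = U₀ := by
  obtain ⟨G₀, hG₀⟩ := exists_mul_eq_one_of_rank_eq_card (h.trans Fintype.card_sum.symm)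
  refine ⟨G₀ * fromRows X₀ U₀, fromRows_inj ?_⟩
  rw [← fromRows_mul, ← Matrix.mul_assoc, hG₀, Matrix.one_mul]

theorem add_mul_eq_mul_of_eq_add_mul {R n m l : Type*} [Fintype n] [Fintype m] [Fintype l]
    [DecidableEq n] [Semiring R] {A : Matrix n n R} {B : Matrix n m R} {X X' : Matrix n l R}
    {U : Matrix m l R} {G : Matrix l n R} {K : Matrix m n R}
    (hdata : X' = A * X + B * U) (hX : X * G = 1) (hU : U * G = K) :
    A + B * K = X' * G := by
  rw [hdata, Matrix.add_mul, Matrix.mul_assoc, Matrix.mul_assoc, hX, hU, Matrix.mul_one]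

end Matrix

theorem data_driven_representation_successive_ensembles_general
    {n m L : ℕ} (Ni : ℕ)
    (Tseq : ℕ → ℕ)
    (hTmono : ∀ i < Ni, Tseq i < Tseq (i + 1))
    (A : ℕ → Matrix (Fin n) (Fin n) ℝ) (B : ℕ → Matrix (Fin n) (Fin m) ℝ)
    (Xi : ℕ → ℕ → Matrix (Fin n) (Fin L) ℝ) (Ui : ℕ → ℕ → Matrix (Fin m) (Fin L) ℝ)
    (hdata : ∀ i, 1 ≤ i → i ≤ Ni → ∀ k, Tseq (i - 1) ≤ k → k < Tseq i →
      Xi i (k + 1) = A k * Xi i k + B k * Ui i k)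
    (hrank : ∀ i, 1 ≤ i → i ≤ Ni → ∀ k, Tseq (i - 1) ≤ k → k < Tseq i →
      (Matrix.fromRows (Xi i k) (Ui i k)).rank = n + m) :
    ∀ K : ℕ → Matrix (Fin m) (Fin n) ℝ,
      (∀ i, 1 ≤ i → i ≤ Ni → ∀ k, Tseq (i - 1) ≤ k → k < Tseq i →
        ∃ G : Matrix (Fin L) (Fin n) ℝ,
          Xi i k * G = (1 : Matrix (Fin n) (Fin n) ℝ) ∧ Ui i k * G = K k) ∧
      ∀ G : ℕ → Matrix (Fin L) (Fin n) ℝ,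
        (∀ i, 1 ≤ i → i ≤ Ni → ∀ k, Tseq (i - 1) ≤ k → k < Tseq i →
          Xi i k * G k = (1 : Matrix (Fin n) (Fin n) ℝ) ∧ Ui i k * G k = K k) →
        ∀ i, 1 ≤ i → i ≤ Ni → ∀ k, Tseq (i - 1) ≤ k → k < Tseq i →
          A k + B k * K k = Xi i (k + 1) * G k ∧
          ∀ x : ℕ → Fin n → ℝ,
            (∀ j < Tseq Ni, x (j + 1) = (A j + B j * K j).mulVec (x j)) →
            x (k + 1) = (Xi i (k + 1) * G k).mulVec (x k) := by
  intro K
  refine ⟨fun i hi1 hiN k hk1 hk2 => ?_, fun G hG i hi1 hiN k hk1 hk2 => ?_⟩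
  · refine exists_mul_eq_and_mul_eq_of_rank_fromRows ?_ 1 (K k)
    rw [hrank i hi1 hiN k hk1 hk2, Fintype.card_fin, Fintype.card_fin]
  · obtain ⟨hX, hU⟩ := hG i hi1 hiN k hk1 hk2
    have hclosed := add_mul_eq_mul_of_eq_add_mul (hdata i hi1 hiN k hk1 hk2) hX hU
    have hk : k < Tseq Ni :=
      hk2.trans_le (Nat.apply_le_apply_of_forall_le_succ (fun j hj => (hTmono j hj).le) hiN)
    exact ⟨hclosed, fun x hx => by rw [hx k hk, hclosed]⟩

/-- Data-driven closed-loop representation from successive ensembles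
of experiments (Lemma 1 of the paper). `Tseq i` denotes the instant `T_i`. -/
theorem data_driven_representation_successive_ensembles
    {n m L : ℕ} (Ni : ℕ)
    (Tseq : ℕ → ℕ) (hT0 : Tseq 0 = 0)
    (hTmono : ∀ i < Ni, Tseq i < Tseq (i + 1))
    (A : ℕ → Matrix (Fin n) (Fin n) ℝ) (B : ℕ → Matrix (Fin n) (Fin m) ℝ)
    (Xi : ℕ → ℕ → Matrix (Fin n) (Fin L) ℝ) (Ui : ℕ → ℕ → Matrix (Fin m) (Fin L) ℝ)
    (hdata : ∀ i, 1 ≤ i → i ≤ Ni → ∀ k, Tseq (i - 1) ≤ k → k < Tseq i →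
      Xi i (k + 1) = A k * Xi i k + B k * Ui i k)
    (hrank : ∀ i, 1 ≤ i → i ≤ Ni → ∀ k, Tseq (i - 1) ≤ k → k < Tseq i →
      (Matrix.fromRows (Xi i k) (Ui i k)).rank = n + m) :
    ∀ K : ℕ → Matrix (Fin m) (Fin n) ℝ,
      (∀ i, 1 ≤ i → i ≤ Ni → ∀ k, Tseq (i - 1) ≤ k → k < Tseq i →
        ∃ G : Matrix (Fin L) (Fin n) ℝ,
          Xi i k * G = (1 : Matrix (Fin n) (Fin n) ℝ) ∧ Ui i k * G = K k) ∧
      ∀ G : ℕ → Matrix (Fin L) (Fin n) ℝ,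
        (∀ i, 1 ≤ i → i ≤ Ni → ∀ k, Tseq (i - 1) ≤ k → k < Tseq i →
          Xi i k * G k = (1 : Matrix (Fin n) (Fin n) ℝ) ∧ Ui i k * G k = K k) →
        ∀ i, 1 ≤ i → i ≤ Ni → ∀ k, Tseq (i - 1) ≤ k → k < Tseq i →
          A k + B k * K k = Xi i (k + 1) * G k ∧
          ∀ x : ℕ → Fin n → ℝ,
            (∀ j < Tseq Ni, x (j + 1) = (A j + B j * K j).mulVec (x j)) →
            x (k + 1) = (Xi i (k + 1) * G k).mulVec (x k) :=
  data_driven_representation_successive_ensembles_general Ni Tseq hTmono A B Xi Ui hdata hrank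
end

section
/- Let l ≥ 1 and suppose rank[X_i(k); U_i(k)] = n+m for all k = T_{i−1},…,T_i−1 and all i = 1,…,l (with T_0 = 0). Let η ≥ 1 and ρ > η be finite constants, and suppose Y_l(k) ∈ ℝ^{L×n} and symmetric P_l(k) ∈ ℝ^{n×n} satisfy: (i) [[P_l(k+1) − I_n, X_i(k+1)Y_l(k)], [Y_l(k)ᵀX_i(k+1)ᵀ, P_l(k)]] ⪰ 0 for k = T_{i−1},…,T_i−1, i = 1,…,l; (ii) X_i(k)Y_l(k) = P_l(k) for k = T_{i−1},…,T_i−1, i = 1,…,l; (iii) ηI_n ⪯ P_l(k) ⪯ ρI_n for k = 0,…,T_l. Then every trajectory of the closed-loop system x(k+1) = (A(k) + B(k)K(k))x(k), with K(k) = U_i(k)Y_l(k)P_l(k)^{−1} for k = T_{i−1},…,T_i−1, i = 1,…,l, satisfies ‖x(k)‖ ≤ √(ρ/η)·(1 − 1/ρ)^{k/2}·‖x(0)‖ for k = 0,…,T_l. -/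
open Matrix

variable {N : Type*} [Fintype N] [DecidableEq N]

lemma myPsdSmul {M : Matrix N N ℝ} (hM : M.PosSemidef) {c : ℝ} (hc : 0 ≤ c) :
    (c • M).PosSemidef := by
  refine PosSemidef.of_dotProduct_mulVec_nonneg ?_ fun v => ?_
  · rw [IsHermitian, conjTranspose_smul, hM.1.eq]
    simp
  · rw [smul_mulVec, dotProduct_smul]
    exact mul_nonneg hc (hM.dotProduct_mulVec_nonneg v)

lemma myPosDefSmul {M : Matrix N N ℝ} (hM : M.PosDef) {c : ℝ} (hc : 0 < c) :
    (c • M).PosDef := by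
  refine PosDef.of_dotProduct_mulVec_pos ?_ fun v hv => ?_
  · rw [IsHermitian, conjTranspose_smul, hM.1.eq]
    simp
  · rw [smul_mulVec, dotProduct_smul]
    exact mul_pos hc (hM.dotProduct_mulVec_pos hv)

lemma mySmulOneInv {c : ℝ} (hc : c ≠ 0) :
    (c • (1 : Matrix N N ℝ))⁻¹ = c⁻¹ • (1 : Matrix N N ℝ) := by
  apply inv_eq_right_inv
  rw [smul_mul_smul_comm, one_mul, mul_inv_cancel₀ hc, one_smul]

lemma mySmulOnePosDef {c : ℝ} (hc : 0 < c) : (c • (1 : Matrix N N ℝ)).PosDef :=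
  myPosDefSmul Matrix.PosDef.one hc

/-- From `Q - G P⁻¹ Gᵀ ⪰ 0` conclude `P - Gᵀ Q⁻¹ G ⪰ 0`, for posdef `P, Q`. -/
lemma mySwap {Q Pm G : Matrix N N ℝ} (hQ : Q.PosDef) (hP : Pm.PosDef)
    (h : (Q - G * Pm⁻¹ * Gᴴ).PosSemidef) : (Pm - Gᴴ * Q⁻¹ * G).PosSemidef := by
  haveI : Invertible Q := hQ.isUnit.invertible
  haveI : Invertible Pm := hP.isUnit.invertible
  have hblock : (fromBlocks Q G Gᴴ Pm).PosSemidef :=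
    (PosDef.fromBlocks₂₂ Q G hP).mpr h
  exact (PosDef.fromBlocks₁₁ G Pm hQ).mp hblock

/-- `P ⪯ c•1` implies `c⁻¹•1 ⪯ P⁻¹`. -/
lemma myInvLower {Pm : Matrix N N ℝ} (hP : Pm.PosDef) {c : ℝ} (hc : 0 < c)
    (h : (c • (1 : Matrix N N ℝ) - Pm).PosSemidef) :
    (Pm⁻¹ - c⁻¹ • (1 : Matrix N N ℝ)).PosSemidef := by
  have h' : (c • (1 : Matrix N N ℝ) - (1 : Matrix N N ℝ) * Pm⁻¹⁻¹ * (1 : Matrix N N ℝ)ᴴ).PosSemidef := by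
    rwa [Pm.nonsing_inv_nonsing_inv hP.det_pos.ne'.isUnit, conjTranspose_one, one_mul, mul_one]
  have hswap := mySwap (mySmulOnePosDef hc) hP.inv h'
  rwa [conjTranspose_one, one_mul, mul_one, mySmulOneInv hc.ne'] at hswap

/-- `c•1 ⪯ P` implies `P⁻¹ ⪯ c⁻¹•1`. -/
lemma myInvUpper {Pm : Matrix N N ℝ} (hP : Pm.PosDef) {c : ℝ} (hc : 0 < c)
    (h : (Pm - c • (1 : Matrix N N ℝ)).PosSemidef) :
    (c⁻¹ • (1 : Matrix N N ℝ) - Pm⁻¹).PosSemidef := by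
  have h' : (Pm - (1 : Matrix N N ℝ) * (c⁻¹ • (1 : Matrix N N ℝ))⁻¹ * (1 : Matrix N N ℝ)ᴴ).PosSemidef := by
    rwa [mySmulOneInv (inv_ne_zero hc.ne'), inv_inv, conjTranspose_one, one_mul, mul_one]
  have hswap := mySwap hP (mySmulOnePosDef (inv_pos.mpr hc)) h'
  rwa [conjTranspose_one, one_mul, mul_one] at hswap

lemma myIsUnitDet {Pm : Matrix N N ℝ} (hP : Pm.PosDef) : IsUnit Pm.det := hP.det_pos.ne'.isUnit

set_option maxHeartbeats 1000000 in
/-- The key Lyapunov decrease step. -/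
lemma myLyapStep {Pk Q G : Matrix N N ℝ} (hPk : Pk.PosDef) (hQ : Q.PosDef)
    {ρ : ℝ} (hρ : 1 < ρ) (hQhigh : (ρ • (1 : Matrix N N ℝ) - Q).PosSemidef)
    (hLMI : (Q - 1 - G * Pk⁻¹ * Gᴴ).PosSemidef) (v : N → ℝ) :
    ((G * Pk⁻¹) *ᵥ v) ⬝ᵥ (Q⁻¹ *ᵥ ((G * Pk⁻¹) *ᵥ v))
      ≤ (1 - 1 / ρ) * (v ⬝ᵥ (Pk⁻¹ *ᵥ v)) := by
  have hρ0 : (0:ℝ) < ρ := lt_trans one_pos hρ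
  set c : ℝ := 1 - 1 / ρ with hcdef
  have hc : 0 < c := by
    rw [hcdef, sub_pos, div_lt_one hρ0]; exact hρ
  -- Step A : c•Q - G Pk⁻¹ Gᴴ ⪰ 0
  have keyA : (c • Q - G * Pk⁻¹ * Gᴴ).PosSemidef := by
    have hEq : c • Q - G * Pk⁻¹ * Gᴴ
        = (Q - 1 - G * Pk⁻¹ * Gᴴ) + ρ⁻¹ • (ρ • (1 : Matrix N N ℝ) - Q) := by
      rw [hcdef]
      match_scalars <;> (field_simp; try ring)
    rw [hEq]
    exact hLMI.add (myPsdSmul hQhigh (by positivity))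
  -- Step B : from swap, c•Pk - Gᴴ Q⁻¹ G ⪰ 0
  have hcQ : (c • Q).PosDef := myPosDefSmul hQ hc
  have keyB0 : (Pk - Gᴴ * (c • Q)⁻¹ * G).PosSemidef := by
    apply mySwap hcQ hPk
    have hinv : (c • Q)⁻¹ = c⁻¹ • Q⁻¹ := by
      apply inv_eq_right_inv
      rw [smul_mul_smul_comm, Q.mul_nonsing_inv hQ.det_pos.ne'.isUnit,
        mul_inv_cancel₀ hc.ne', one_smul]
    -- need c•Q - G Pk⁻¹ Gᴴ PSD: that's keyA, but the statement for mySwap at Q := c•Q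
    -- requires (c•Q - G * Pk⁻¹ * Gᴴ).PosSemidef
    exact keyA
  have hinvcQ : (c • Q)⁻¹ = c⁻¹ • Q⁻¹ := by
    apply inv_eq_right_inv
    rw [smul_mul_smul_comm, Q.mul_nonsing_inv hQ.det_pos.ne'.isUnit,
      mul_inv_cancel₀ hc.ne', one_smul]
  have keyB : (c • Pk - Gᴴ * Q⁻¹ * G).PosSemidef := by
    have := myPsdSmul keyB0 hc.le
    have hEq : c • (Pk - Gᴴ * (c • Q)⁻¹ * G) = c • Pk - Gᴴ * Q⁻¹ * G := by
      rw [hinvcQ, smul_sub]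
      congr 1
      rw [Matrix.mul_smul, Matrix.smul_mul, smul_smul, mul_inv_cancel₀ hc.ne', one_smul]
    rwa [hEq] at this
  -- Step C : congruence by Pk⁻¹
  have hPkinvH : (Pk⁻¹)ᴴ = Pk⁻¹ := hPk.inv.isHermitian.eq
  have keyC : (c • Pk⁻¹ - (G * Pk⁻¹)ᴴ * Q⁻¹ * (G * Pk⁻¹)).PosSemidef := by
    have := keyB.conjTranspose_mul_mul_same Pk⁻¹
    have hEq : (Pk⁻¹)ᴴ * (c • Pk - Gᴴ * Q⁻¹ * G) * Pk⁻¹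
        = c • Pk⁻¹ - (G * Pk⁻¹)ᴴ * Q⁻¹ * (G * Pk⁻¹) := by
      rw [hPkinvH, Matrix.mul_sub, Matrix.sub_mul]
      congr 1
      · rw [Matrix.mul_smul, Matrix.smul_mul,
          Pk.nonsing_inv_mul hPk.det_pos.ne'.isUnit, one_mul]
      · rw [conjTranspose_mul, hPkinvH]
        noncomm_ring
    rwa [hEq] at this
  -- Step D : quadratic forms
  have hq := keyC.dotProduct_mulVec_nonneg v
  rw [star_trivial, sub_mulVec, dotProduct_sub, smul_mulVec, dotProduct_smul,
    sub_nonneg] at hq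
  have hquad : ∀ (M S : Matrix N N ℝ),
      v ⬝ᵥ ((Mᵀ * S * M) *ᵥ v) = (M *ᵥ v) ⬝ᵥ (S *ᵥ (M *ᵥ v)) := by
    intro M S
    rw [← Matrix.mulVec_mulVec, ← Matrix.mulVec_mulVec, dotProduct_mulVec,
      Matrix.vecMul_transpose]
  calc ((G * Pk⁻¹) *ᵥ v) ⬝ᵥ (Q⁻¹ *ᵥ ((G * Pk⁻¹) *ᵥ v))
      = v ⬝ᵥ (((G * Pk⁻¹)ᴴ * Q⁻¹ * (G * Pk⁻¹)) *ᵥ v) := by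
        rw [conjTranspose_eq_transpose_of_trivial, hquad]
    _ ≤ c • (v ⬝ᵥ (Pk⁻¹ *ᵥ v)) := hq
    _ = c * (v ⬝ᵥ (Pk⁻¹ *ᵥ v)) := rfl

set_option maxHeartbeats 1600000 in
/-- Bounded closed-loop trajectories from successive ensembles of
experiments (Corollary 2 of the paper). `Tseq i` denotes the instant `T_i`. -/
theorem bounded_trajectories_successive_ensembles
    {n m L : ℕ} (Ni l : ℕ) (hl : 1 ≤ l) (hlNi : l ≤ Ni)
    (Tseq : ℕ → ℕ) (hT0 : Tseq 0 = 0)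
    (hTmono : ∀ i < Ni, Tseq i < Tseq (i + 1))
    (A : ℕ → Matrix (Fin n) (Fin n) ℝ) (B : ℕ → Matrix (Fin n) (Fin m) ℝ)
    (Xi : ℕ → ℕ → Matrix (Fin n) (Fin L) ℝ) (Ui : ℕ → ℕ → Matrix (Fin m) (Fin L) ℝ)
    (hdata : ∀ i, 1 ≤ i → i ≤ l → ∀ k, Tseq (i - 1) ≤ k → k < Tseq i →
      Xi i (k + 1) = A k * Xi i k + B k * Ui i k)
    (hrank : ∀ i, 1 ≤ i → i ≤ l → ∀ k, Tseq (i - 1) ≤ k → k < Tseq i →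
      (Matrix.fromRows (Xi i k) (Ui i k)).rank = n + m)
    (η ρ : ℝ) (hη : 1 ≤ η) (hρ : η < ρ)
    (Y : ℕ → Matrix (Fin L) (Fin n) ℝ) (P : ℕ → Matrix (Fin n) (Fin n) ℝ)
    (hPsymm : ∀ k ≤ Tseq l, (P k).IsSymm)
    (hLMI : ∀ i, 1 ≤ i → i ≤ l → ∀ k, Tseq (i - 1) ≤ k → k < Tseq i →
      (Matrix.fromBlocks (P (k + 1) - 1) (Xi i (k + 1) * Y k)
        ((Y k)ᵀ * (Xi i (k + 1))ᵀ) (P k)).PosSemidef)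
    (heq : ∀ i, 1 ≤ i → i ≤ l → ∀ k, Tseq (i - 1) ≤ k → k < Tseq i →
      Xi i k * Y k = P k)
    (hPlow : ∀ k ≤ Tseq l, (P k - η • (1 : Matrix (Fin n) (Fin n) ℝ)).PosSemidef)
    (hPhigh : ∀ k ≤ Tseq l, (ρ • (1 : Matrix (Fin n) (Fin n) ℝ) - P k).PosSemidef)
    (K : ℕ → Matrix (Fin m) (Fin n) ℝ)
    (hK : ∀ i, 1 ≤ i → i ≤ l → ∀ k, Tseq (i - 1) ≤ k → k < Tseq i →
      K k = Ui i k * Y k * (P k)⁻¹) :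
    ∀ x : ℕ → EuclideanSpace ℝ (Fin n),
      (∀ k < Tseq l, x (k + 1) = matVec (A k + B k * K k) (x k)) →
      ∀ k ≤ Tseq l,
        ‖x k‖ ≤ Real.sqrt (ρ / η) * Real.sqrt ((1 - 1 / ρ) ^ k) * ‖x 0‖ := by
  classical
  intro x hx
  have hρ1 : (1:ℝ) < ρ := lt_of_le_of_lt hη hρ
  have hρ0 : (0:ℝ) < ρ := lt_trans one_pos hρ1
  have hη0 : (0:ℝ) < η := lt_of_lt_of_le one_pos hη
  set c : ℝ := 1 - 1 / ρ with hcdef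
  have hc0 : 0 < c := by rw [hcdef, sub_pos, div_lt_one hρ0]; exact hρ1
  -- monotonicity of Tseq
  have hmono : ∀ i j, i ≤ j → j ≤ Ni → Tseq i ≤ Tseq j := by
    intro i j
    induction j with
    | zero => intro h _; cases Nat.le_zero.mp h; exact le_rfl
    | succ j ih =>
      intro hij hj
      rcases Nat.eq_or_lt_of_le hij with h | h
      · rw [h]
      · exact le_trans (ih (Nat.lt_succ_iff.mp h) (by omega)) (hTmono j (by omega)).le
  -- interval decomposition
  have hinterval : ∀ k, k < Tseq l → ∃ i, 1 ≤ i ∧ i ≤ l ∧ Tseq (i-1) ≤ k ∧ k < Tseq i := by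
    intro k hk
    have hex : ∃ i, k < Tseq i := ⟨l, hk⟩
    refine ⟨Nat.find hex, ?_, Nat.find_min' hex hk, ?_, Nat.find_spec hex⟩
    · by_contra h
      have h0 : Nat.find hex = 0 := by omega
      have := Nat.find_spec hex
      rw [h0, hT0] at this
      omega
    · by_cases h0 : Nat.find hex = 0
      · have := Nat.find_spec hex
        rw [h0, hT0] at this; omega
      · have := Nat.find_min hex (show Nat.find hex - 1 < Nat.find hex by omega)
        omega
  -- positive definiteness of P
  have hPd : ∀ k, k ≤ Tseq l → (P k).PosDef := by
    intro k hk
    refine PosDef.of_dotProduct_mulVec_pos ?_ fun v hv => ?_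
    · rw [Matrix.IsHermitian, conjTranspose_eq_transpose_of_trivial]
      exact hPsymm k hk
    · have h1 := (hPlow k hk).dotProduct_mulVec_nonneg v
      rw [star_trivial, sub_mulVec, dotProduct_sub, smul_mulVec, one_mulVec,
        dotProduct_smul, sub_nonneg, smul_eq_mul] at h1
      have h3 := dotProduct_star_self_nonneg v
      rw [star_trivial] at h3
      have h2 : 0 < v ⬝ᵥ v :=
        lt_of_le_of_ne h3 (fun h => hv (dotProduct_self_eq_zero.mp h.symm))
      exact lt_of_lt_of_le (mul_pos hη0 h2) h1
  -- Lyapunov function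
  set V : ℕ → ℝ := fun k => (fun j => x k j) ⬝ᵥ ((P k)⁻¹ *ᵥ (fun j => x k j)) with hVdef
  have hVnonneg : ∀ k, k ≤ Tseq l → 0 ≤ V k := by
    intro k hk
    have := (hPd k hk).inv.posSemidef.dotProduct_mulVec_nonneg (fun j => x k j)
    rwa [star_trivial] at this
  -- decrease step
  have hdec : ∀ k, k < Tseq l → V (k+1) ≤ c * V k := by
    intro k hk
    obtain ⟨i, hi1, hil, hk1, hk2⟩ := hinterval k hk
    have hTil : Tseq i ≤ Tseq l := hmono i l hil hlNi
    have hkle : k ≤ Tseq l := le_trans hk2.le hTil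
    have hk1le : k + 1 ≤ Tseq l := le_trans hk2 hTil
    have hPkd := hPd k hkle
    have hQd := hPd (k+1) hk1le
    have hPinv : P k * (P k)⁻¹ = 1 := Matrix.mul_nonsing_inv _ hPkd.det_pos.ne'.isUnit
    -- closed loop matrix
    have hcl : A k + B k * K k = (Xi i (k+1) * Y k) * (P k)⁻¹ := by
      rw [hK i hi1 hil k hk1 hk2, hdata i hi1 hil k hk1 hk2]
      have hA : A k * (Xi i k * Y k) * (P k)⁻¹ = A k := by
        rw [heq i hi1 hil k hk1 hk2, Matrix.mul_assoc, hPinv, Matrix.mul_one]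
      calc A k + B k * (Ui i k * Y k * (P k)⁻¹)
          = A k * (Xi i k * Y k) * (P k)⁻¹ + B k * (Ui i k * Y k * (P k)⁻¹) := by
            rw [hA]
        _ = (A k * Xi i k + B k * Ui i k) * Y k * (P k)⁻¹ := by
            simp [Matrix.add_mul, Matrix.mul_assoc]
    -- Schur complement of the LMI
    have hlmi := hLMI i hi1 hil k hk1 hk2
    have hGH : (Y k)ᵀ * (Xi i (k+1))ᵀ = (Xi i (k+1) * Y k)ᴴ := by
      rw [conjTranspose_mul, conjTranspose_eq_transpose_of_trivial,
        conjTranspose_eq_transpose_of_trivial]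
    rw [hGH] at hlmi
    haveI : Invertible (P k) := hPkd.isUnit.invertible
    have hschur := (Matrix.PosDef.fromBlocks₂₂ _ _ hPkd).mp hlmi
    have hstep := myLyapStep hPkd hQd hρ1 (hPhigh (k+1) hk1le) hschur (fun j => x k j)
    have hxv : (fun j => x (k+1) j) = (Xi i (k+1) * Y k * (P k)⁻¹) *ᵥ (fun j => x k j) := by
      funext j
      rw [hx k hk, hcl]
      simp [matVec]
    rw [hVdef]
    simp only
    rw [hxv]
    exact hstep
  -- iterate
  have hVbound : ∀ k, k ≤ Tseq l → V k ≤ c ^ k * V 0 := by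
    intro k
    induction k with
    | zero => intro _; simp
    | succ k ih =>
      intro hk
      have hk' : k < Tseq l := by omega
      calc V (k+1) ≤ c * V k := hdec k hk'
        _ ≤ c * (c ^ k * V 0) := mul_le_mul_of_nonneg_left (ih (by omega)) hc0.le
        _ = c ^ (k+1) * V 0 := by ring
  -- norm identity
  have hnorm : ∀ k : ℕ, ‖x k‖ ^ 2 = (fun j => x k j) ⬝ᵥ (fun j => x k j) := by
    intro k
    rw [EuclideanSpace.norm_eq, Real.sq_sqrt (Finset.sum_nonneg fun i _ => sq_nonneg _)]
    simp [dotProduct, Real.norm_eq_abs, sq_abs, sq]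
  -- lower bound : ‖x k‖² ≤ ρ V k
  have hVlow : ∀ k, k ≤ Tseq l → ‖x k‖ ^ 2 ≤ ρ * V k := by
    intro k hk
    have h := (myInvLower (hPd k hk) hρ0 (hPhigh k hk)).dotProduct_mulVec_nonneg (fun j => x k j)
    rw [star_trivial, sub_mulVec, dotProduct_sub, smul_mulVec, one_mulVec,
      dotProduct_smul, sub_nonneg, smul_eq_mul] at h
    rw [hnorm k]
    have := mul_le_mul_of_nonneg_left h hρ0.le
    calc (fun j => x k j) ⬝ᵥ (fun j => x k j)
        = ρ * (ρ⁻¹ * ((fun j => x k j) ⬝ᵥ (fun j => x k j))) := by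
          field_simp
      _ ≤ ρ * V k := this
  -- upper bound at time 0
  have hVup0 : V 0 ≤ η⁻¹ * ‖x 0‖ ^ 2 := by
    have h := (myInvUpper (hPd 0 (Nat.zero_le _)) hη0 (hPlow 0 (Nat.zero_le _))).dotProduct_mulVec_nonneg
      (fun j => x 0 j)
    rw [star_trivial, sub_mulVec, dotProduct_sub, smul_mulVec, one_mulVec,
      dotProduct_smul, sub_nonneg, smul_eq_mul] at h
    rw [hnorm 0]
    exact h
  -- finish
  intro k hk
  have hck : (0:ℝ) ≤ c ^ k := pow_nonneg hc0.le k
  have h1 : ‖x k‖ ^ 2 ≤ (ρ / η * c ^ k) * ‖x 0‖ ^ 2 := by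
    have a1 := hVlow k hk
    have a2 := hVbound k hk
    have a3 := hVup0
    have b1 : ρ * V k ≤ ρ * (c ^ k * V 0) := mul_le_mul_of_nonneg_left a2 hρ0.le
    have b2 : c ^ k * V 0 ≤ c ^ k * (η⁻¹ * ‖x 0‖ ^ 2) := mul_le_mul_of_nonneg_left a3 hck
    have b3 : ρ * (c ^ k * V 0) ≤ ρ * (c ^ k * (η⁻¹ * ‖x 0‖ ^ 2)) :=
      mul_le_mul_of_nonneg_left b2 hρ0.le
    have : ρ * (c ^ k * (η⁻¹ * ‖x 0‖ ^ 2)) = (ρ / η * c ^ k) * ‖x 0‖ ^ 2 := by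
      field_simp
    linarith
  have hrhs : Real.sqrt (ρ / η) * Real.sqrt (c ^ k) * ‖x 0‖
      = Real.sqrt ((ρ / η * c ^ k) * ‖x 0‖ ^ 2) := by
    rw [Real.sqrt_mul (by positivity : (0:ℝ) ≤ ρ / η * c ^ k),
      Real.sqrt_mul (by positivity : (0:ℝ) ≤ ρ / η), Real.sqrt_sq (norm_nonneg _)]
  rw [hrhs]
  calc ‖x k‖ = Real.sqrt (‖x k‖ ^ 2) := (Real.sqrt_sq (norm_nonneg _)).symm
    _ ≤ Real.sqrt ((ρ / η * c ^ k) * ‖x 0‖ ^ 2) := Real.sqrt_le_sqrt h1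
end

section
/- Let l > 1, let η̃ ≥ 1 and ρ̃ > η̃ be finite constants, and suppose Y_{l−1}(k) ∈ ℝ^{L×n} and symmetric P_{l−1}(k) with η̃I_n ⪯ P_{l−1}(k) ⪯ ρ̃I_n satisfy, for k = T_{i−1},…,T_i−1 and i = 1,…,l−1: [[P_{l−1}(k+1) − I_n, X_i(k+1)Y_{l−1}(k)], [Y_{l−1}(k)ᵀX_i(k+1)ᵀ, P_{l−1}(k)]] ⪰ 0 and X_i(k)Y_{l−1}(k) = P_{l−1}(k), yielding gains K_{l−1}(k) = U_i(k)Y_{l−1}(k)P_{l−1}(k)^{−1} on [0, T_{l−1}−1]. Suppose rank[X_l(k); U_l(k)] = n+m for k = T_{l−1},…,T_l−1, and let Ỹ_l(k) ∈ ℝ^{L×n} and symmetric P̃_l(k) satisfy: (i) [[P̃_l(k+1) − I_n, X_l(k+1)Ỹ_l(k)], [Ỹ_l(k)ᵀX_l(k+1)ᵀ, P̃_l(k)]] ⪰ 0 and X_l(k)Ỹ_l(k) = P̃_l(k) for k = T_{l−1},…,T_l−1; (ii) η̃I_n ⪯ P̃_l(k) ⪯ ρ̃I_n for k = T_{l−1},…,T_l;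 (iii) P̃_l(T_{l−1}) − I_n − F_{l−1} ⪰ 0, where F_{l−1} = X_{l−1}(T_{l−1}) Y_{l−1}(T_{l−1}−1) P_{l−1}(T_{l−1}−1)^{−1} Y_{l−1}(T_{l−1}−1)ᵀ X_{l−1}(T_{l−1})ᵀ. Then the gain sequence K_l(k) defined by K_l(k) = K_{l−1}(k) for k = 0,…,T_{l−1}−1 and K_l(k) = U_l(k)Ỹ_l(k)P̃_l(k)^{−1} for k = T_{l−1},…,T_l−1 is such that every trajectory of x(k+1) = (A(k)+B(k)K_l(k))x(k) satisfies ‖x(k)‖ ≤ √(ρ̃/η̃)·(1 − 1/ρ̃)^{k/2}·‖x(0)‖ for k = 0,…,T_l. -/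
open Matrix

variable {N : ℕ}

lemma psd_smul_s5 {A : Matrix (Fin N) (Fin N) ℝ} {c : ℝ} (hA : A.PosSemidef) (hc : 0 ≤ c) :
    (c • A).PosSemidef := by
  refine Matrix.PosSemidef.of_dotProduct_mulVec_nonneg ?_ fun x => ?_
  · unfold Matrix.IsHermitian at *
    rw [conjTranspose_smul, hA.1]; simp
  · rw [Matrix.smul_mulVec, dotProduct_smul, smul_eq_mul]
    exact mul_nonneg hc (hA.dotProduct_mulVec_nonneg x)

lemma posdef_smul_one {a : ℝ} (ha : 0 < a) :
    ((a : ℝ) • (1 : Matrix (Fin N) (Fin N) ℝ)).PosDef := by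
  refine Matrix.PosDef.of_dotProduct_mulVec_pos ?_ fun x hx => ?_
  · unfold Matrix.IsHermitian
    rw [conjTranspose_smul, conjTranspose_one]; simp
  · rw [Matrix.smul_mulVec, one_mulVec, dotProduct_smul, smul_eq_mul]
    exact mul_pos ha (dotProduct_star_self_pos_iff.mpr hx)

lemma posdef_of_ge_smul_one {P : Matrix (Fin N) (Fin N) ℝ} {a : ℝ} (ha : 0 < a)
    (h : (P - a • 1).PosSemidef) : P.PosDef := by
  have := (posdef_smul_one (N := N) ha).add_posSemidef h
  simpa using this

open scoped MatrixOrder in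
/-- Conjugation of a psd matrix by the symmetric square root of `P⁻¹`:
`P⁻¹ ≼ a⁻¹ • 1` when `a • 1 ≼ P`. -/
lemma inv_le_of_ge {P : Matrix (Fin N) (Fin N) ℝ} {a : ℝ} (hP : P.PosDef) (ha : 0 < a)
    (h : (P - a • 1).PosSemidef) :
    (a⁻¹ • (1 : Matrix (Fin N) (Fin N) ℝ) - P⁻¹).PosSemidef := by
  have hPinv : (P⁻¹).PosDef := hP.inv
  set S : Matrix (Fin N) (Fin N) ℝ := CFC.sqrt (P⁻¹) with hS
  have hSS : S * S = P⁻¹ := CFC.sqrt_mul_sqrt_self (P⁻¹) hPinv.posSemidef.nonneg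
  have hSH : Sᴴ = S := (CFC.sqrt_nonneg (P⁻¹)).posSemidef.isHermitian
  have hSdet : S.det ≠ 0 := by
    intro h0
    have : (P⁻¹).det = 0 := by rw [← hSS, det_mul, h0, zero_mul]
    exact (hP.inv.det_pos.ne' this)
  have hPeq : P = S⁻¹ * S⁻¹ := by
    have : P⁻¹⁻¹ = (S * S)⁻¹ := by rw [hSS]
    rwa [Matrix.nonsing_inv_nonsing_inv P hP.det_pos.ne'.isUnit, Matrix.mul_inv_rev] at this
  have hSPS : S * P * S = 1 := by
    rw [hPeq, ← Matrix.mul_assoc, Matrix.mul_assoc (S * S⁻¹),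
      Matrix.mul_nonsing_inv S hSdet.isUnit, Matrix.nonsing_inv_mul S hSdet.isUnit, one_mul]
  have hconj : (S * (P - a • 1) * Sᴴ).PosSemidef := h.mul_mul_conjTranspose_same S
  rw [hSH] at hconj
  have hexp : S * (P - a • 1) * S = 1 - a • P⁻¹ := by
    rw [mul_sub, sub_mul, hSPS, mul_smul_comm, mul_one, smul_mul_assoc, hSS]
  rw [hexp] at hconj
  have := psd_smul_s5 hconj (le_of_lt (inv_pos.mpr ha))
  rw [smul_sub, smul_smul, inv_mul_cancel₀ ha.ne', one_smul] at this
  exact this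

open scoped MatrixOrder in
lemma inv_ge_of_le {P : Matrix (Fin N) (Fin N) ℝ} {a : ℝ} (hP : P.PosDef) (ha : 0 < a)
    (h : (a • (1 : Matrix (Fin N) (Fin N) ℝ) - P).PosSemidef) :
    (P⁻¹ - a⁻¹ • (1 : Matrix (Fin N) (Fin N) ℝ)).PosSemidef := by
  have hPinv : (P⁻¹).PosDef := hP.inv
  set S : Matrix (Fin N) (Fin N) ℝ := CFC.sqrt (P⁻¹) with hS
  have hSS : S * S = P⁻¹ := CFC.sqrt_mul_sqrt_self (P⁻¹) hPinv.posSemidef.nonneg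
  have hSH : Sᴴ = S := (CFC.sqrt_nonneg (P⁻¹)).posSemidef.isHermitian
  have hSdet : S.det ≠ 0 := by
    intro h0
    have : (P⁻¹).det = 0 := by rw [← hSS, det_mul, h0, zero_mul]
    exact (hP.inv.det_pos.ne' this)
  have hPeq : P = S⁻¹ * S⁻¹ := by
    have : P⁻¹⁻¹ = (S * S)⁻¹ := by rw [hSS]
    rwa [Matrix.nonsing_inv_nonsing_inv P hP.det_pos.ne'.isUnit, Matrix.mul_inv_rev] at this
  have hSPS : S * P * S = 1 := by
    rw [hPeq, ← Matrix.mul_assoc, Matrix.mul_assoc (S * S⁻¹),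
      Matrix.mul_nonsing_inv S hSdet.isUnit, Matrix.nonsing_inv_mul S hSdet.isUnit, one_mul]
  have hconj : (S * (a • 1 - P) * Sᴴ).PosSemidef := h.mul_mul_conjTranspose_same S
  rw [hSH] at hconj
  have hexp : S * (a • 1 - P) * S = a • P⁻¹ - 1 := by
    rw [mul_sub, sub_mul, hSPS, mul_smul_comm, mul_one, smul_mul_assoc, hSS]
  rw [hexp] at hconj
  have := psd_smul_s5 hconj (le_of_lt (inv_pos.mpr ha))
  rw [smul_sub, smul_smul, inv_mul_cancel₀ ha.ne', one_smul] at this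
  exact this

lemma posdef_smul {A : Matrix (Fin N) (Fin N) ℝ} {c : ℝ} (hA : A.PosDef) (hc : 0 < c) :
    (c • A).PosDef := by
  refine Matrix.PosDef.of_dotProduct_mulVec_pos ?_ fun x hx => ?_
  · unfold Matrix.IsHermitian at *
    rw [conjTranspose_smul, hA.1]; simp
  · rw [Matrix.smul_mulVec, dotProduct_smul, smul_eq_mul]
    exact mul_pos hc (hA.dotProduct_mulVec_pos hx)

lemma quad_conj (A B : Matrix (Fin N) (Fin N) ℝ) (x : Fin N → ℝ) :
    x ⬝ᵥ (Bᴴ * A * B) *ᵥ x = (B *ᵥ x) ⬝ᵥ (A *ᵥ (B *ᵥ x)) := by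
  rw [← Matrix.mulVec_mulVec, ← Matrix.mulVec_mulVec, Matrix.dotProduct_mulVec x,
    conjTranspose_eq_transpose_of_trivial, Matrix.vecMul_transpose]

lemma step_psd {P P' M : Matrix (Fin N) (Fin N) ℝ} {c : ℝ} (hc : 0 < c)
    (hP : P.PosDef) (hP' : P'.PosDef)
    (h : (c • P' - M * P⁻¹ * Mᴴ).PosSemidef) :
    (P⁻¹ - c⁻¹ • ((M * P⁻¹)ᴴ * P'⁻¹ * (M * P⁻¹))).PosSemidef := by
  haveI : Invertible P := P.invertibleOfIsUnitDet hP.det_pos.ne'.isUnit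
  have hcP' : (c • P').PosDef := posdef_smul hP' hc
  haveI : Invertible (c • P') := (c • P').invertibleOfIsUnitDet hcP'.det_pos.ne'.isUnit
  have block : (fromBlocks (c • P') M Mᴴ P).PosSemidef :=
    (PosDef.fromBlocks₂₂ (c • P') M hP).mpr h
  have schur : (P - Mᴴ * (c • P')⁻¹ * M).PosSemidef :=
    (PosDef.fromBlocks₁₁ M P hcP').mp block
  have hinvH : (P⁻¹)ᴴ = P⁻¹ := hP.isHermitian.inv
  have hconj : (P⁻¹ * (P - Mᴴ * (c • P')⁻¹ * M) * (P⁻¹)ᴴ).PosSemidef :=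
    schur.mul_mul_conjTranspose_same P⁻¹
  rw [hinvH] at hconj
  have hcinv : (c • P')⁻¹ = c⁻¹ • P'⁻¹ := by
    apply Matrix.inv_eq_right_inv
    rw [smul_mul_assoc, mul_smul_comm, smul_smul, mul_inv_cancel₀ hc.ne',
      Matrix.mul_nonsing_inv P' hP'.det_pos.ne'.isUnit, one_smul]
  have hPP : P⁻¹ * P = 1 := Matrix.nonsing_inv_mul P hP.det_pos.ne'.isUnit
  have hPP' : P * P⁻¹ = 1 := Matrix.mul_nonsing_inv P hP.det_pos.ne'.isUnit
  have hexp : P⁻¹ * (P - Mᴴ * (c • P')⁻¹ * M) * P⁻¹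
      = P⁻¹ - c⁻¹ • ((M * P⁻¹)ᴴ * P'⁻¹ * (M * P⁻¹)) := by
    rw [hcinv, mul_sub, sub_mul, ← Matrix.mul_assoc, hPP, one_mul]
    congr 1
    rw [conjTranspose_mul, hinvH]
    simp only [mul_smul_comm, smul_mul_assoc]
    congr 1
    noncomm_ring
  rw [hexp] at hconj
  exact hconj

lemma step_ineq_s5 {P P' M : Matrix (Fin N) (Fin N) ℝ} {ρ : ℝ} (hρ1 : 1 < ρ)
    (hP : P.PosDef) (hP' : P'.PosDef)
    (hhigh : (ρ • (1 : Matrix (Fin N) (Fin N) ℝ) - P').PosSemidef)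
    (hLMI : (P' - 1 - M * P⁻¹ * Mᴴ).PosSemidef) (v : Fin N → ℝ) :
    ((M * P⁻¹) *ᵥ v) ⬝ᵥ (P'⁻¹ *ᵥ ((M * P⁻¹) *ᵥ v))
      ≤ (1 - 1 / ρ) * (v ⬝ᵥ P⁻¹ *ᵥ v) := by
  have hρ0 : (0 : ℝ) < ρ := lt_trans one_pos hρ1
  set c : ℝ := 1 - 1 / ρ with hcdef
  have hc : 0 < c := by
    rw [hcdef, sub_pos, div_lt_one hρ0]; exact hρ1
  have key : c • P' - M * P⁻¹ * Mᴴ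
      = (P' - 1 - M * P⁻¹ * Mᴴ) + ρ⁻¹ • (ρ • (1 : Matrix (Fin N) (Fin N) ℝ) - P') := by
    rw [smul_sub, smul_smul, inv_mul_cancel₀ hρ0.ne', one_smul,
      show c = 1 - ρ⁻¹ by rw [hcdef, one_div]]
    module
  have h1 : (c • P' - M * P⁻¹ * Mᴴ).PosSemidef := by
    rw [key]; exact hLMI.add (psd_smul_s5 hhigh (inv_nonneg.mpr hρ0.le))
  have spsd := step_psd hc hP hP' h1
  have h0 := spsd.dotProduct_mulVec_nonneg v
  rw [star_trivial, Matrix.sub_mulVec, dotProduct_sub, Matrix.smul_mulVec,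
    dotProduct_smul, smul_eq_mul, sub_nonneg, quad_conj] at h0
  have h2 := mul_le_mul_of_nonneg_left h0 hc.le
  rw [← mul_assoc, mul_inv_cancel₀ hc.ne', one_mul] at h2
  exact h2

variable {N : ℕ}

lemma euclid_dot (y : EuclideanSpace ℝ (Fin N)) :
    (fun i => y i) ⬝ᵥ (fun i => y i) = ‖y‖ ^ 2 := by
  rw [EuclideanSpace.norm_eq, Real.sq_sqrt (by positivity)]
  simp [dotProduct, pow_two]

lemma closedloop_eq {n m L : ℕ} (A : Matrix (Fin n) (Fin n) ℝ) (B : Matrix (Fin n) (Fin m) ℝ)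
    (X X' : Matrix (Fin n) (Fin L) ℝ) (U : Matrix (Fin m) (Fin L) ℝ)
    (Y : Matrix (Fin L) (Fin n) ℝ) (P : Matrix (Fin n) (Fin n) ℝ) (hPd : P.PosDef)
    (hX' : X' = A * X + B * U) (hXY : X * Y = P) :
    A + B * (U * Y * P⁻¹) = X' * Y * P⁻¹ := by
  have hPinv : P * P⁻¹ = 1 := Matrix.mul_nonsing_inv P hPd.det_pos.ne'.isUnit
  have h1 : A * X * Y * P⁻¹ = A := by
    rw [Matrix.mul_assoc A X Y, hXY, Matrix.mul_assoc, hPinv, mul_one]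
  rw [hX', Matrix.add_mul, Matrix.add_mul, h1, Matrix.mul_assoc B U Y,
    Matrix.mul_assoc B (U * Y) P⁻¹]


lemma lmi_schur {N L : ℕ} {P' P : Matrix (Fin N) (Fin N) ℝ} {X' : Matrix (Fin N) (Fin L) ℝ}
    {Y : Matrix (Fin L) (Fin N) ℝ} (hP : P.PosDef)
    (h : (fromBlocks (P' - 1) (X' * Y) (Yᵀ * X'ᵀ) P).PosSemidef) :
    (P' - 1 - (X' * Y) * P⁻¹ * (X' * Y)ᴴ).PosSemidef := by
  haveI : Invertible P := P.invertibleOfIsUnitDet hP.det_pos.ne'.isUnit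
  have hT : Yᵀ * X'ᵀ = (X' * Y)ᴴ := by
    rw [conjTranspose_mul, conjTranspose_eq_transpose_of_trivial,
      conjTranspose_eq_transpose_of_trivial]
  rw [hT] at h
  exact (PosDef.fromBlocks₂₂ _ _ hP).mp h

section Main

/-- Sequential extension of a bounding controller to a new
subinterval (Corollary 3 of the paper). `Tseq i` denotes the instant `T_i`;
`Yprev`, `Pprev`, `Kprev` are the data from the previous `l-1` ensembles and
`Ytil`, `Ptil` extend them to the `l`-th subinterval. -/
theorem sequential_extension_bounded_trajectories
    {n m L : ℕ} (Ni l : ℕ) (hl : 1 < l) (hlNi : l ≤ Ni)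
    (Tseq : ℕ → ℕ) (hT0 : Tseq 0 = 0)
    (hTmono : ∀ i < Ni, Tseq i < Tseq (i + 1))
    (A : ℕ → Matrix (Fin n) (Fin n) ℝ) (B : ℕ → Matrix (Fin n) (Fin m) ℝ)
    (Xi : ℕ → ℕ → Matrix (Fin n) (Fin L) ℝ) (Ui : ℕ → ℕ → Matrix (Fin m) (Fin L) ℝ)
    (hdata : ∀ i, 1 ≤ i → i ≤ l → ∀ k, Tseq (i - 1) ≤ k → k < Tseq i →
      Xi i (k + 1) = A k * Xi i k + B k * Ui i k)
    (ηt ρt : ℝ) (hη : 1 ≤ ηt) (hρ : ηt < ρt)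
    -- data from the previous `l-1` ensembles:
    (Yprev : ℕ → Matrix (Fin L) (Fin n) ℝ) (Pprev : ℕ → Matrix (Fin n) (Fin n) ℝ)
    (hPprevSymm : ∀ k ≤ Tseq (l - 1), (Pprev k).IsSymm)
    (hPprevLow : ∀ k ≤ Tseq (l - 1),
      (Pprev k - ηt • (1 : Matrix (Fin n) (Fin n) ℝ)).PosSemidef)
    (hPprevHigh : ∀ k ≤ Tseq (l - 1),
      (ρt • (1 : Matrix (Fin n) (Fin n) ℝ) - Pprev k).PosSemidef)
    (hprevLMI : ∀ i, 1 ≤ i → i ≤ l - 1 → ∀ k, Tseq (i - 1) ≤ k → k < Tseq i →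
      (Matrix.fromBlocks (Pprev (k + 1) - 1) (Xi i (k + 1) * Yprev k)
        ((Yprev k)ᵀ * (Xi i (k + 1))ᵀ) (Pprev k)).PosSemidef)
    (hprevEq : ∀ i, 1 ≤ i → i ≤ l - 1 → ∀ k, Tseq (i - 1) ≤ k → k < Tseq i →
      Xi i k * Yprev k = Pprev k)
    (Kprev : ℕ → Matrix (Fin m) (Fin n) ℝ)
    (hKprev : ∀ i, 1 ≤ i → i ≤ l - 1 → ∀ k, Tseq (i - 1) ≤ k → k < Tseq i →
      Kprev k = Ui i k * Yprev k * (Pprev k)⁻¹)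
    -- data from the new (l-th) ensemble:
    (hrank : ∀ k, Tseq (l - 1) ≤ k → k < Tseq l →
      (Matrix.fromRows (Xi l k) (Ui l k)).rank = n + m)
    (Ytil : ℕ → Matrix (Fin L) (Fin n) ℝ) (Ptil : ℕ → Matrix (Fin n) (Fin n) ℝ)
    (hPtilSymm : ∀ k, Tseq (l - 1) ≤ k → k ≤ Tseq l → (Ptil k).IsSymm)
    (htilLMI : ∀ k, Tseq (l - 1) ≤ k → k < Tseq l →
      (Matrix.fromBlocks (Ptil (k + 1) - 1) (Xi l (k + 1) * Ytil k)
        ((Ytil k)ᵀ * (Xi l (k + 1))ᵀ) (Ptil k)).PosSemidef)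
    (htilEq : ∀ k, Tseq (l - 1) ≤ k → k < Tseq l → Xi l k * Ytil k = Ptil k)
    (hPtilLow : ∀ k, Tseq (l - 1) ≤ k → k ≤ Tseq l →
      (Ptil k - ηt • (1 : Matrix (Fin n) (Fin n) ℝ)).PosSemidef)
    (hPtilHigh : ∀ k, Tseq (l - 1) ≤ k → k ≤ Tseq l →
      (ρt • (1 : Matrix (Fin n) (Fin n) ℝ) - Ptil k).PosSemidef)
    -- the extra boundary constraint (iii):
    (hbdry : (Ptil (Tseq (l - 1)) - 1 -
        Xi (l - 1) (Tseq (l - 1)) * Yprev (Tseq (l - 1) - 1) *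
          (Pprev (Tseq (l - 1) - 1))⁻¹ * (Yprev (Tseq (l - 1) - 1))ᵀ *
          (Xi (l - 1) (Tseq (l - 1)))ᵀ).PosSemidef)
    -- the extended gain sequence:
    (Kl : ℕ → Matrix (Fin m) (Fin n) ℝ)
    (hKl1 : ∀ k < Tseq (l - 1), Kl k = Kprev k)
    (hKl2 : ∀ k, Tseq (l - 1) ≤ k → k < Tseq l →
      Kl k = Ui l k * Ytil k * (Ptil k)⁻¹) :
    ∀ x : ℕ → EuclideanSpace ℝ (Fin n),
      (∀ k < Tseq l, x (k + 1) = matVec (A k + B k * Kl k) (x k)) →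
      ∀ k ≤ Tseq l,
        ‖x k‖ ≤ Real.sqrt (ρt / ηt) * Real.sqrt ((1 - 1 / ρt) ^ k) * ‖x 0‖ := by
  intro x hx k hkT
  -- basic arithmetic facts
  have hρ1 : (1 : ℝ) < ρt := lt_of_le_of_lt hη hρ
  have hη0 : (0 : ℝ) < ηt := lt_of_lt_of_le one_pos hη
  have hρ0 : (0 : ℝ) < ρt := lt_trans one_pos hρ1
  set c : ℝ := 1 - 1 / ρt with hcdef
  have hc : 0 < c := by rw [hcdef, sub_pos, div_lt_one hρ0]; exact hρ1
  set T1 := Tseq (l - 1) with hT1def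
  set T := Tseq l with hTdef
  have hT1T : T1 < T := by
    have h := hTmono (l - 1) (by omega)
    rwa [show l - 1 + 1 = l by omega] at h
  have hT1pos : 0 < T1 := by
    have h1 := hTmono (l - 2) (by omega)
    rw [show l - 2 + 1 = l - 1 by omega] at h1
    omega
  -- locate each instant before T1 inside one of the first l-1 subintervals
  have hfind : ∀ j, j ≤ l - 1 → ∀ k', k' < Tseq j →
      ∃ i, 1 ≤ i ∧ i ≤ j ∧ Tseq (i - 1) ≤ k' ∧ k' < Tseq i := by
    intro j
    induction j with
    | zero => intro _ k' hk'; rw [hT0] at hk'; omega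
    | succ j ih =>
      intro hj k' hk'
      by_cases h : k' < Tseq j
      · obtain ⟨i, h1, h2, h3, h4⟩ := ih (by omega) k' h
        exact ⟨i, h1, by omega, h3, h4⟩
      · exact ⟨j + 1, by omega, le_refl _, by simpa using not_lt.mp h, hk'⟩
  -- the pasted Lyapunov matrix
  set Pk : ℕ → Matrix (Fin n) (Fin n) ℝ :=
    fun k' => if k' < T1 then Pprev k' else Ptil k' with hPkdef
  set xv : ℕ → Fin n → ℝ := fun k' i => x k' i with hxvdef
  set V : ℕ → ℝ := fun k' => xv k' ⬝ᵥ (Pk k')⁻¹ *ᵥ xv k' with hVdef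
  have hPkLow : ∀ k' ≤ T, (Pk k' - ηt • (1 : Matrix (Fin n) (Fin n) ℝ)).PosSemidef := by
    intro k' hk'
    by_cases h : k' < T1
    · simp only [hPkdef, if_pos h]; exact hPprevLow k' (le_of_lt h)
    · simp only [hPkdef, if_neg h]; exact hPtilLow k' (not_lt.mp h) hk'
  have hPkHigh : ∀ k' ≤ T, (ρt • (1 : Matrix (Fin n) (Fin n) ℝ) - Pk k').PosSemidef := by
    intro k' hk'
    by_cases h : k' < T1
    · simp only [hPkdef, if_pos h]; exact hPprevHigh k' (le_of_lt h)
    · simp only [hPkdef, if_neg h]; exact hPtilHigh k' (not_lt.mp h) hk'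
  have hPkPD : ∀ k' ≤ T, (Pk k').PosDef :=
    fun k' hk' => posdef_of_ge_smul_one hη0 (hPkLow k' hk')
  -- one-step decay of the Lyapunov function
  have hstep : ∀ k', k' < T → V (k' + 1) ≤ c * V k' := by
    intro k' hk'
    have hxvstep : xv (k' + 1) = (A k' + B k' * Kl k') *ᵥ xv k' := by
      funext i
      show x (k' + 1) i = _
      rw [hx k' hk']
      rfl
    rcases Nat.lt_trichotomy (k' + 1) T1 with hcase | hcase | hcase
    · -- strictly inside the first l-1 subintervals
      have hk1 : k' < T1 := by omega
      obtain ⟨i, hi1, hi2, hi3, hi4⟩ := hfind (l - 1) (le_refl _) k' hk1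
      have hPd : (Pprev k').PosDef := posdef_of_ge_smul_one hη0 (hPprevLow k' hk1.le)
      have hPd' : (Pprev (k' + 1)).PosDef :=
        posdef_of_ge_smul_one hη0 (hPprevLow (k' + 1) hcase.le)
      have hcl : A k' + B k' * Kl k' = Xi i (k' + 1) * Yprev k' * (Pprev k')⁻¹ := by
        rw [hKl1 k' hk1, hKprev i hi1 hi2 k' hi3 hi4]
        exact closedloop_eq _ _ _ _ _ _ _ hPd
          (hdata i hi1 (by omega) k' hi3 hi4) (hprevEq i hi1 hi2 k' hi3 hi4)
      have hLMI := lmi_schur hPd (hprevLMI i hi1 hi2 k' hi3 hi4)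
      have hineq := step_ineq_s5 hρ1 hPd hPd' (hPprevHigh (k' + 1) hcase.le) hLMI (xv k')
      have e1 : Pk k' = Pprev k' := by simp only [hPkdef, if_pos hk1]
      have e2 : Pk (k' + 1) = Pprev (k' + 1) := by simp only [hPkdef, if_pos hcase]
      show xv (k' + 1) ⬝ᵥ (Pk (k' + 1))⁻¹ *ᵥ xv (k' + 1)
          ≤ c * (xv k' ⬝ᵥ (Pk k')⁻¹ *ᵥ xv k')
      rw [e1, e2, hxvstep, hcl]
      exact hineq
    · -- the boundary step: k' + 1 = T1
      have hk1 : k' < T1 := by omega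
      have hi1 : 1 ≤ l - 1 := by omega
      have hi3 : Tseq (l - 1 - 1) ≤ k' := by
        have h1 := hTmono (l - 2) (by omega)
        rw [show l - 2 + 1 = l - 1 by omega] at h1
        rw [show l - 1 - 1 = l - 2 by omega]
        omega
      have hi4 : k' < Tseq (l - 1) := hk1
      have hPd : (Pprev k').PosDef := posdef_of_ge_smul_one hη0 (hPprevLow k' hk1.le)
      have hPd' : (Ptil (k' + 1)).PosDef :=
        posdef_of_ge_smul_one hη0 (hPtilLow (k' + 1) (by omega) (by omega))
      have hcl : A k' + B k' * Kl k'
          = Xi (l - 1) (k' + 1) * Yprev k' * (Pprev k')⁻¹ := by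
        rw [hKl1 k' hk1, hKprev (l - 1) hi1 (le_refl _) k' hi3 hi4]
        exact closedloop_eq _ _ _ _ _ _ _ hPd
          (hdata (l - 1) hi1 (by omega) k' hi3 hi4)
          (hprevEq (l - 1) hi1 (le_refl _) k' hi3 hi4)
      have hb := hbdry
      rw [← hcase] at hb
      simp only [Nat.add_sub_cancel] at hb
      rw [show Xi (l - 1) (k' + 1) * Yprev k' * (Pprev k')⁻¹ * (Yprev k')ᵀ
            * (Xi (l - 1) (k' + 1))ᵀ
          = Xi (l - 1) (k' + 1) * Yprev k' * (Pprev k')⁻¹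
            * (Xi (l - 1) (k' + 1) * Yprev k')ᴴ from by
        rw [conjTranspose_mul, conjTranspose_eq_transpose_of_trivial,
          conjTranspose_eq_transpose_of_trivial, ← Matrix.mul_assoc]] at hb
      have hineq := step_ineq_s5 hρ1 hPd hPd' (hPtilHigh (k' + 1) (by omega) (by omega))
        hb (xv k')
      have e1 : Pk k' = Pprev k' := by simp only [hPkdef, if_pos hk1]
      have e2 : Pk (k' + 1) = Ptil (k' + 1) := by
        simp only [hPkdef, if_neg (by omega : ¬ (k' + 1 < T1))]
      show xv (k' + 1) ⬝ᵥ (Pk (k' + 1))⁻¹ *ᵥ xv (k' + 1)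
          ≤ c * (xv k' ⬝ᵥ (Pk k')⁻¹ *ᵥ xv k')
      rw [e1, e2, hxvstep, hcl]
      exact hineq
    · -- inside the l-th subinterval
      have hge : T1 ≤ k' := by omega
      have hPd : (Ptil k').PosDef :=
        posdef_of_ge_smul_one hη0 (hPtilLow k' hge (by omega))
      have hPd' : (Ptil (k' + 1)).PosDef :=
        posdef_of_ge_smul_one hη0 (hPtilLow (k' + 1) (by omega) (by omega))
      have hcl : A k' + B k' * Kl k' = Xi l (k' + 1) * Ytil k' * (Ptil k')⁻¹ := by
        rw [hKl2 k' hge hk']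
        exact closedloop_eq _ _ _ _ _ _ _ hPd
          (hdata l (by omega) (le_refl l) k' hge hk') (htilEq k' hge hk')
      have hLMI := lmi_schur hPd (htilLMI k' hge hk')
      have hineq := step_ineq_s5 hρ1 hPd hPd' (hPtilHigh (k' + 1) (by omega) (by omega))
        hLMI (xv k')
      have e1 : Pk k' = Ptil k' := by
        simp only [hPkdef, if_neg (by omega : ¬ (k' < T1))]
      have e2 : Pk (k' + 1) = Ptil (k' + 1) := by
        simp only [hPkdef, if_neg (by omega : ¬ (k' + 1 < T1))]
      show xv (k' + 1) ⬝ᵥ (Pk (k' + 1))⁻¹ *ᵥ xv (k' + 1)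
          ≤ c * (xv k' ⬝ᵥ (Pk k')⁻¹ *ᵥ xv k')
      rw [e1, e2, hxvstep, hcl]
      exact hineq

  -- iterated decay
  have hdecay : ∀ k' ≤ T, V k' ≤ c ^ k' * V 0 := by
    intro k'
    induction k' with
    | zero => intro _; simp
    | succ k' ih =>
      intro hk'
      calc V (k' + 1) ≤ c * V k' := hstep k' (by omega)
        _ ≤ c * (c ^ k' * V 0) := mul_le_mul_of_nonneg_left (ih (by omega)) hc.le
        _ = c ^ (k' + 1) * V 0 := by ring
  -- comparison with the norm
  have hlow : ∀ k' ≤ T, ρt⁻¹ * ‖x k'‖ ^ 2 ≤ V k' := by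
    intro k' hk'
    have h := (inv_ge_of_le (hPkPD k' hk') hρ0 (hPkHigh k' hk')).dotProduct_mulVec_nonneg (xv k')
    rw [star_trivial, Matrix.sub_mulVec, dotProduct_sub, Matrix.smul_mulVec,
      one_mulVec, dotProduct_smul, smul_eq_mul, sub_nonneg] at h
    have hd : xv k' ⬝ᵥ xv k' = ‖x k'‖ ^ 2 := euclid_dot (x k')
    rw [hd] at h
    exact h
  have hhigh0 : V 0 ≤ ηt⁻¹ * ‖x 0‖ ^ 2 := by
    have h := (inv_le_of_ge (hPkPD 0 (by omega)) hη0 (hPkLow 0 (by omega))).dotProduct_mulVec_nonneg (xv 0)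
    rw [star_trivial, Matrix.sub_mulVec, dotProduct_sub, Matrix.smul_mulVec,
      one_mulVec, dotProduct_smul, smul_eq_mul, sub_nonneg] at h
    have hd : xv 0 ⬝ᵥ xv 0 = ‖x 0‖ ^ 2 := euclid_dot (x 0)
    rw [hd] at h
    exact h
  -- final computation
  have hsq : ‖x k‖ ^ 2 ≤ ρt / ηt * c ^ k * ‖x 0‖ ^ 2 := by
    have h1 : ρt⁻¹ * ‖x k‖ ^ 2 ≤ c ^ k * (ηt⁻¹ * ‖x 0‖ ^ 2) := by
      calc ρt⁻¹ * ‖x k‖ ^ 2 ≤ V k := hlow k hkT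
        _ ≤ c ^ k * V 0 := hdecay k hkT
        _ ≤ c ^ k * (ηt⁻¹ * ‖x 0‖ ^ 2) :=
            mul_le_mul_of_nonneg_left hhigh0 (pow_nonneg hc.le k)
    have h2 := mul_le_mul_of_nonneg_left h1 hρ0.le
    rw [← mul_assoc, mul_inv_cancel₀ hρ0.ne', one_mul] at h2
    calc ‖x k‖ ^ 2 ≤ ρt * (c ^ k * (ηt⁻¹ * ‖x 0‖ ^ 2)) := h2
      _ = ρt / ηt * c ^ k * ‖x 0‖ ^ 2 := by ring
  have hfin := Real.sqrt_le_sqrt hsq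
  rw [Real.sqrt_sq (norm_nonneg _)] at hfin
  calc ‖x k‖ ≤ Real.sqrt (ρt / ηt * c ^ k * ‖x 0‖ ^ 2) := hfin
    _ = Real.sqrt (ρt / ηt) * Real.sqrt (c ^ k) * ‖x 0‖ := by
        rw [Real.sqrt_mul (by positivity), Real.sqrt_mul (by positivity),
          Real.sqrt_sq (norm_nonneg _)]


end Main
end

section
/- Suppose the system is φ-periodic, i.e. A(k+φ) = A(k) and B(k+φ) = B(k) for all k ≥ 0, and that rank[X(k); U(k)] = n+m for k = 0,…,φ−1. Let η ≥ 1 and ρ > η be finite constants, and suppose Y(k) ∈ ℝ^{L×n} and symmetric P(k) ∈ ℝ^{n×n} satisfy: (i) [[P(k+1) − I_n, X(k+1)Y(k)], [Y(k)ᵀX(k+1)ᵀ, P(k)]] ⪰ 0 and X(k)Y(k) = P(k) for k = 0,…,φ−1; (ii) ηI_n ⪯ P(k) ⪯ ρI_n for k = 0,…,φ; (iii) P(φ) = P(0). Define K(k) = U(k)Y(k)P(k)^{−1} for k = 0,…,φ−1 and extend it φ-periodically, i.e. K(k + n_pφ) = K(k) for all n_p ≥ 0. Then the closed-loop system x(k+1)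 = (A(k)+B(k)K(k))x(k) is exponentially stable; in particular every trajectory satisfies ‖x(k)‖ ≤ √(ρ/η)·(1 − 1/ρ)^{k/2}·‖x(0)‖ for all k ≥ 0. -/
open Matrix

section AuxHelpers
set_option linter.unusedSectionVars false

variable {ι κ : Type*} [Fintype ι] [DecidableEq ι] [Fintype κ] [DecidableEq κ]

lemma aux_dot_nonneg {M : Matrix ι ι ℝ} (hM : M.PosSemidef) (x : ι → ℝ) :
    0 ≤ x ⬝ᵥ (M *ᵥ x) := by
  simpa using hM.dotProduct_mulVec_nonneg x

lemma aux_psd_smul {M : Matrix ι ι ℝ} (hM : M.PosSemidef) {c : ℝ} (hc : 0 ≤ c) :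
    (c • M).PosSemidef := by
  refine Matrix.PosSemidef.of_dotProduct_mulVec_nonneg ?_ (fun x => ?_)
  · show (c • M)ᴴ = c • M
    rw [conjTranspose_smul, hM.1]
    simp
  · have := hM.dotProduct_mulVec_nonneg x
    rw [smul_mulVec, dotProduct_smul]
    exact mul_nonneg hc this

lemma aux_posDef_smul {M : Matrix ι ι ℝ} (hM : M.PosDef) {c : ℝ} (hc : 0 < c) :
    (c • M).PosDef := by
  refine posDef_iff_dotProduct_mulVec.mpr ⟨?_, fun x hx => ?_⟩
  · show (c • M)ᴴ = c • M
    rw [conjTranspose_smul, hM.1]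
    simp
  · have := (posDef_iff_dotProduct_mulVec.mp hM).2 hx
    rw [smul_mulVec, dotProduct_smul]
    exact mul_pos hc this

lemma aux_posDef_of_sub_psd {M : Matrix ι ι ℝ} (hsym : M.IsHermitian) {a : ℝ} (ha : 0 < a)
    (h : (M - a • (1 : Matrix ι ι ℝ)).PosSemidef) : M.PosDef := by
  refine posDef_iff_dotProduct_mulVec.mpr ⟨hsym, fun x hx => ?_⟩
  have h1 := aux_dot_nonneg h x
  have hxx : 0 < x ⬝ᵥ x := by
    have := dotProduct_star_self_pos_iff (v := x)
    simpa using this.mpr hx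
  rw [sub_mulVec, dotProduct_sub, smul_mulVec, one_mulVec, dotProduct_smul,
    smul_eq_mul] at h1
  have : star x = x := by simp
  rw [this]
  nlinarith

lemma aux_smul_inv {M : Matrix ι ι ℝ} (hM : IsUnit M.det) {c : ℝ} (hc : c ≠ 0) :
    (c • M)⁻¹ = c⁻¹ • M⁻¹ :=
  Matrix.inv_eq_right_inv (by
    rw [Matrix.smul_mul, Matrix.mul_smul, smul_smul, mul_inv_cancel₀ hc, one_smul,
      Matrix.mul_nonsing_inv _ hM])

lemma aux_key {Q : Matrix ι ι ℝ} {Pm : Matrix κ κ ℝ} (G : Matrix ι κ ℝ) {c : ℝ}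
    (hQ : Q.PosDef) (hP : Pm.PosDef) (hc : 0 < c)
    (h : (c • Q - G * Pm * Gᵀ).PosSemidef) :
    (c • Pm⁻¹ - Gᵀ * Q⁻¹ * G).PosSemidef := by
  letI := hP.isUnit.invertible
  have hcQ : (c • Q).PosDef := aux_posDef_smul hQ hc
  letI := hcQ.isUnit.invertible
  have hPmT : Pmᵀ = Pm := by
    have := hP.1
    rwa [Matrix.IsHermitian, conjTranspose_eq_transpose_of_trivial] at this
  have hBH : (G * Pm)ᴴ = Pm * Gᵀ := by
    rw [conjTranspose_eq_transpose_of_trivial, transpose_mul, hPmT]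
  have h1 : (fromBlocks (c • Q) (G * Pm) (G * Pm)ᴴ Pm).PosSemidef := by
    rw [Matrix.PosDef.fromBlocks₂₂ _ _ hP]
    have : G * Pm * Pm⁻¹ * (G * Pm)ᴴ = G * Pm * Gᵀ := by
      rw [hBH]
      simp [Matrix.mul_assoc, Matrix.inv_mul_cancel_left_of_invertible]
    rwa [this]
  have h2 : (Pm - (G * Pm)ᴴ * (c • Q)⁻¹ * (G * Pm)).PosSemidef :=
    (Matrix.PosDef.fromBlocks₁₁ _ _ hcQ).mp h1
  have h3 := h2.conjTranspose_mul_mul_same Pm⁻¹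
  have hinv : (c • Q)⁻¹ = c⁻¹ • Q⁻¹ := aux_smul_inv (hQ.det_pos.ne'.isUnit) hc.ne'
  have hPinvH : (Pm⁻¹)ᴴ = Pm⁻¹ := hP.1.inv
  have h4 : (Pm⁻¹)ᴴ * (Pm - (G * Pm)ᴴ * (c • Q)⁻¹ * (G * Pm)) * Pm⁻¹
      = Pm⁻¹ - c⁻¹ • (Gᵀ * Q⁻¹ * G) := by
    rw [hBH, hinv, hPinvH, Matrix.mul_sub, Matrix.sub_mul]
    congr 1
    · rw [Matrix.inv_mul_of_invertible, Matrix.one_mul]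
    · rw [Matrix.mul_smul, Matrix.smul_mul]
      congr 1
      simp [Matrix.mul_assoc, Matrix.inv_mul_cancel_left_of_invertible,
        Matrix.mul_inv_of_invertible]
  rw [h4] at h3
  have h5 := aux_psd_smul h3 hc.le
  have h6 : c • (Pm⁻¹ - c⁻¹ • (Gᵀ * Q⁻¹ * G)) = c • Pm⁻¹ - Gᵀ * Q⁻¹ * G := by
    rw [smul_sub, smul_smul, mul_inv_cancel₀ hc.ne', one_smul]
  rwa [h6] at h5

end AuxHelpers

/-- Data-driven stabilisation of periodically time-varying systems
(Corollary 4 of the paper). -/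
theorem periodic_data_driven_stabilisation
    {n m L : ℕ} (φ : ℕ) (hφ : 0 < φ)
    (A : ℕ → Matrix (Fin n) (Fin n) ℝ) (B : ℕ → Matrix (Fin n) (Fin m) ℝ)
    (hAper : ∀ k, A (k + φ) = A k) (hBper : ∀ k, B (k + φ) = B k)
    (X : ℕ → Matrix (Fin n) (Fin L) ℝ) (U : ℕ → Matrix (Fin m) (Fin L) ℝ)
    (hdata : ∀ k < φ, X (k + 1) = A k * X k + B k * U k)
    (hrank : ∀ k < φ, (Matrix.fromRows (X k) (U k)).rank = n + m)
    (η ρ : ℝ) (hη : 1 ≤ η) (hρ : η < ρ)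
    (Y : ℕ → Matrix (Fin L) (Fin n) ℝ) (P : ℕ → Matrix (Fin n) (Fin n) ℝ)
    (hPsymm : ∀ k ≤ φ, (P k).IsSymm)
    (hLMI : ∀ k < φ,
      (Matrix.fromBlocks (P (k + 1) - 1) (X (k + 1) * Y k)
        ((Y k)ᵀ * (X (k + 1))ᵀ) (P k)).PosSemidef)
    (heq : ∀ k < φ, X k * Y k = P k)
    (hPlow : ∀ k ≤ φ, (P k - η • (1 : Matrix (Fin n) (Fin n) ℝ)).PosSemidef)
    (hPhigh : ∀ k ≤ φ, (ρ • (1 : Matrix (Fin n) (Fin n) ℝ) - P k).PosSemidef)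
    (hPper : P φ = P 0)
    (K : ℕ → Matrix (Fin m) (Fin n) ℝ)
    (hK : ∀ k < φ, K k = U k * Y k * (P k)⁻¹)
    (hKper : ∀ k, K (k + φ) = K k) :
    -- exponential stability of the closed loop ...
    (∃ c : ℝ, 0 < c ∧ ∃ r : ℝ, 0 ≤ r ∧ r < 1 ∧
      ∀ x : ℕ → EuclideanSpace ℝ (Fin n),
        (∀ k, x (k + 1) = matVec (A k + B k * K k) (x k)) →
        ∀ k, ‖x k‖ ≤ c * r ^ k * ‖x 0‖) ∧
    -- ... and in particular the explicit decay bound: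
    ∀ x : ℕ → EuclideanSpace ℝ (Fin n),
      (∀ k, x (k + 1) = matVec (A k + B k * K k) (x k)) →
      ∀ k, ‖x k‖ ≤ Real.sqrt (ρ / η) * Real.sqrt ((1 - 1 / ρ) ^ k) * ‖x 0‖ := by
  classical
  have hρ1 : (1:ℝ) < ρ := lt_of_le_of_lt hη hρ
  have hρ0 : (0:ℝ) < ρ := by linarith
  have hη0 : (0:ℝ) < η := by linarith
  set c : ℝ := 1 - ρ⁻¹ with hc_def
  have hρinv : (0:ℝ) < ρ⁻¹ := inv_pos.mpr hρ0
  have hρinv1 : ρ⁻¹ < 1 := by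
    rw [inv_lt_one_iff₀]; right; exact hρ1
  have hc0 : 0 < c := by rw [hc_def]; linarith
  have hc1 : c < 1 := by rw [hc_def]; linarith
  -- positive definiteness of the P k
  have hherm : ∀ k ≤ φ, (P k).IsHermitian := fun k hk => by
    rw [Matrix.IsHermitian, conjTranspose_eq_transpose_of_trivial]; exact hPsymm k hk
  have hPd : ∀ k ≤ φ, (P k).PosDef := fun k hk =>
    aux_posDef_of_sub_psd (hherm k hk) hη0 (hPlow k hk)
  -- the one-step Lyapunov matrix inequality
  have hstep : ∀ r < φ, (c • (P r)⁻¹ -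
      (A r + B r * K r)ᵀ * (P (r+1))⁻¹ * (A r + B r * K r)).PosSemidef := by
    intro r hr
    have hr1 : r + 1 ≤ φ := hr
    have hPdr := hPd r hr.le
    have hPdr1 := hPd (r+1) hr1
    letI := hPdr.isUnit.invertible
    have hGP : (A r + B r * K r) * P r = X (r+1) * Y r := by
      have hKP : K r * P r = U r * Y r := by
        rw [hK r hr]
        simp [Matrix.mul_assoc, Matrix.inv_mul_of_invertible]
      calc (A r + B r * K r) * P r
          = A r * P r + B r * (K r * P r) := by rw [Matrix.add_mul, Matrix.mul_assoc]
        _ = A r * (X r * Y r) + B r * (U r * Y r) := by rw [heq r hr, hKP]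
        _ = (A r * X r + B r * U r) * Y r := by
            rw [Matrix.add_mul, Matrix.mul_assoc, Matrix.mul_assoc]
        _ = X (r+1) * Y r := by rw [hdata r hr]
    have hL := hLMI r hr
    have hBH : ((X (r+1)) * Y r)ᴴ = (Y r)ᵀ * (X (r+1))ᵀ := by
      rw [conjTranspose_eq_transpose_of_trivial, transpose_mul]
    rw [← hBH] at hL
    have h2 : (P (r+1) - 1 - (X (r+1) * Y r) * (P r)⁻¹ * (X (r+1) * Y r)ᴴ).PosSemidef :=
      (Matrix.PosDef.fromBlocks₂₂ _ _ hPdr).mp hL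
    set G := A r + B r * K r with hGdef
    have hPrT : (P r)ᵀ = P r := by
      have := hherm r hr.le
      rwa [Matrix.IsHermitian, conjTranspose_eq_transpose_of_trivial] at this
    have h3 : (P (r+1) - 1 - G * P r * Gᵀ).PosSemidef := by
      have heq3 : (X (r+1) * Y r) * (P r)⁻¹ * (X (r+1) * Y r)ᴴ = G * P r * Gᵀ := by
        rw [← hGP, conjTranspose_eq_transpose_of_trivial, transpose_mul, hPrT]
        simp [Matrix.mul_assoc, Matrix.inv_mul_cancel_left_of_invertible]
      rwa [heq3] at h2
    have h4 : ((1:Matrix (Fin n) (Fin n) ℝ) - ρ⁻¹ • P (r+1)).PosSemidef := by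
      have hs := aux_psd_smul (hPhigh (r+1) hr1) (le_of_lt hρinv)
      have heq2 : ρ⁻¹ • (ρ • (1:Matrix (Fin n) (Fin n) ℝ) - P (r+1))
          = 1 - ρ⁻¹ • P (r+1) := by
        rw [smul_sub, smul_smul, inv_mul_cancel₀ hρ0.ne', one_smul]
      rwa [heq2] at hs
    have h5 : (c • P (r+1) - G * P r * Gᵀ).PosSemidef := by
      have hsum := h3.add h4
      have heq4 : (P (r+1) - 1 - G * P r * Gᵀ) + (1 - ρ⁻¹ • P (r+1))
          = c • P (r+1) - G * P r * Gᵀ := by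
        rw [hc_def, sub_smul, one_smul]; abel
      rwa [heq4] at hsum
    exact aux_key G hPdr1 hPdr hc0 h5
  -- quadratic-form bounds coming from η I ≤ P ≤ ρ I
  have hone : (1 : Matrix (Fin n) (Fin n) ℝ)⁻¹ = 1 :=
    Matrix.inv_eq_right_inv (by simp)
  have hup : ∀ r ≤ φ, ∀ v : Fin n → ℝ, v ⬝ᵥ ((P r)⁻¹ *ᵥ v) ≤ η⁻¹ * (v ⬝ᵥ v) := by
    intro r hr v
    have hPdr := hPd r hr
    have hI : ((η:ℝ) • (1 : Matrix (Fin n) (Fin n) ℝ)).PosDef :=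
      aux_posDef_smul Matrix.PosDef.one hη0
    have hpre : ((1:ℝ) • P r - 1 * (η • (1 : Matrix (Fin n) (Fin n) ℝ)) * (1ᵀ)).PosSemidef := by
      have := hPlow r hr
      simpa using this
    have hk := aux_key (1 : Matrix (Fin n) (Fin n) ℝ) hPdr hI one_pos hpre
    have hIinv : ((η:ℝ) • (1 : Matrix (Fin n) (Fin n) ℝ))⁻¹ = η⁻¹ • 1 := by
      rw [aux_smul_inv (by simp) hη0.ne', hone]
    rw [hIinv] at hk
    have hk' : (η⁻¹ • (1 : Matrix (Fin n) (Fin n) ℝ) - (P r)⁻¹).PosSemidef := by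
      simpa using hk
    have := aux_dot_nonneg hk' v
    rw [sub_mulVec, dotProduct_sub, smul_mulVec, one_mulVec, dotProduct_smul,
      smul_eq_mul] at this
    linarith
  have hlo : ∀ r ≤ φ, ∀ v : Fin n → ℝ, ρ⁻¹ * (v ⬝ᵥ v) ≤ v ⬝ᵥ ((P r)⁻¹ *ᵥ v) := by
    intro r hr v
    have hPdr := hPd r hr
    have hpre : (ρ • (1 : Matrix (Fin n) (Fin n) ℝ)
        - 1 * P r * (1ᵀ)).PosSemidef := by
      have := hPhigh r hr
      simpa using this
    have hk := aux_key (1 : Matrix (Fin n) (Fin n) ℝ) Matrix.PosDef.one hPdr hρ0 hpre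
    have hk' : (ρ • (P r)⁻¹ - (1 : Matrix (Fin n) (Fin n) ℝ)).PosSemidef := by
      simpa [hone] using hk
    have := aux_dot_nonneg hk' v
    rw [sub_mulVec, dotProduct_sub, smul_mulVec, dotProduct_smul, smul_eq_mul,
      one_mulVec] at this
    have h2 : v ⬝ᵥ v ≤ ρ * (v ⬝ᵥ ((P r)⁻¹ *ᵥ v)) := by linarith
    have h3 := mul_le_mul_of_nonneg_left h2 hρinv.le
    rwa [← mul_assoc, inv_mul_cancel₀ hρ0.ne', one_mul] at h3
  -- periodic reductions
  have hmod : ∀ (α : Type) (f : ℕ → α), (∀ j, f (j + φ) = f j) → ∀ k, f k = f (k % φ) := by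
    intro α f hf k
    induction k using Nat.strong_induction_on with
    | _ k ih =>
      rcases lt_or_ge k φ with h | h
      · rw [Nat.mod_eq_of_lt h]
      · have h1 : k - φ < k := by omega
        have h2 : f k = f (k - φ) := by
          conv_lhs => rw [show k = (k - φ) + φ by omega]
          exact hf _
        rw [h2, ih _ h1, Nat.mod_eq_sub_mod h]
  have hmodA := hmod _ A hAper
  have hmodB := hmod _ B hBper
  have hmodK := hmod _ K hKper
  -- the trajectory bound
  have main : ∀ x : ℕ → EuclideanSpace ℝ (Fin n),
      (∀ k, x (k + 1) = matVec (A k + B k * K k) (x k)) →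
      ∀ k, ‖x k‖ ≤ Real.sqrt (ρ / η) * Real.sqrt (c ^ k) * ‖x 0‖ := by
    intro x hx k
    set v : ℕ → Fin n → ℝ := fun j i => x j i with hv
    have hvstep : ∀ j, v (j+1)
        = (A (j % φ) + B (j % φ) * K (j % φ)) *ᵥ (v j) := by
      intro j
      have h1 : v (j+1) = (A j + B j * K j) *ᵥ (v j) := by
        funext i
        show x (j+1) i = _
        rw [hx j]
        rfl
      rw [h1, hmodA j, hmodB j, hmodK j]
    set V : ℕ → ℝ := fun j => v j ⬝ᵥ ((P (j % φ))⁻¹ *ᵥ v j) with hV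
    have hVstep : ∀ j, V (j+1) ≤ c * V j := by
      intro j
      set r := j % φ with hr
      have hrφ : r < φ := Nat.mod_lt _ hφ
      have hP1 : P ((j+1) % φ) = P (r+1) := by
        have h1 : (j+1) % φ = (r+1) % φ := by
          rw [Nat.add_mod j 1 φ, Nat.add_mod r 1 φ, ← hr, Nat.mod_eq_of_lt hrφ]
        rcases Nat.lt_or_ge (r+1) φ with h2 | h2
        · rw [h1, Nat.mod_eq_of_lt h2]
        · have h3 : r + 1 = φ := by omega
          rw [h1, h3, Nat.mod_self, ← h3]
          rw [h3]
          exact hPper.symm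
      set G := A r + B r * K r with hG
      have hsv := hstep r hrφ
      have hnn := aux_dot_nonneg hsv (v j)
      rw [sub_mulVec, dotProduct_sub, smul_mulVec, dotProduct_smul, smul_eq_mul] at hnn
      have hquad : v j ⬝ᵥ ((Gᵀ * (P (r+1))⁻¹ * G) *ᵥ v j)
          = (G *ᵥ v j) ⬝ᵥ ((P (r+1))⁻¹ *ᵥ (G *ᵥ v j)) := by
        rw [← Matrix.mulVec_mulVec, ← Matrix.mulVec_mulVec, Matrix.dotProduct_mulVec,
          Matrix.vecMul_transpose]
      rw [hquad] at hnn
      have hVj1 : V (j+1) = (G *ᵥ v j) ⬝ᵥ ((P (r+1))⁻¹ *ᵥ (G *ᵥ v j)) := by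
        rw [hV]
        show v (j+1) ⬝ᵥ ((P ((j+1) % φ))⁻¹ *ᵥ v (j+1)) = _
        rw [hvstep j, hP1, ← hr, ← hG]
      rw [hVj1]
      linarith
    have hVdecay : ∀ j, V j ≤ c ^ j * V 0 := by
      intro j
      induction j with
      | zero => simp
      | succ j ih =>
        calc V (j+1) ≤ c * V j := hVstep j
          _ ≤ c * (c ^ j * V 0) := by
              exact mul_le_mul_of_nonneg_left ih hc0.le
          _ = c ^ (j+1) * V 0 := by ring
    have hnorm : ∀ j, ‖x j‖ = Real.sqrt (v j ⬝ᵥ v j) := by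
      intro j
      rw [EuclideanSpace.norm_eq]
      congr 1
      simp [dotProduct, Real.norm_eq_abs, sq_abs, sq]
      rfl
    have hlo_k : ρ⁻¹ * (v k ⬝ᵥ v k) ≤ V k :=
      hlo (k % φ) (le_of_lt (Nat.mod_lt _ hφ)) (v k)
    have hup0 : V 0 ≤ η⁻¹ * (v 0 ⬝ᵥ v 0) :=
      hup (0 % φ) (le_of_lt (Nat.mod_lt _ hφ)) (v 0)
    have h1 : v k ⬝ᵥ v k ≤ ρ * V k := by
      have h := mul_le_mul_of_nonneg_left hlo_k hρ0.le
      rwa [← mul_assoc, mul_inv_cancel₀ hρ0.ne', one_mul] at h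
    have h2 : V k ≤ c ^ k * (η⁻¹ * (v 0 ⬝ᵥ v 0)) :=
      le_trans (hVdecay k) (mul_le_mul_of_nonneg_left hup0 (pow_nonneg hc0.le k))
    have hdk : v k ⬝ᵥ v k ≤ (ρ/η) * (c ^ k * (v 0 ⬝ᵥ v 0)) := by
      calc v k ⬝ᵥ v k ≤ ρ * V k := h1
        _ ≤ ρ * (c ^ k * (η⁻¹ * (v 0 ⬝ᵥ v 0))) := mul_le_mul_of_nonneg_left h2 hρ0.le
        _ = (ρ/η) * (c ^ k * (v 0 ⬝ᵥ v 0)) := by rw [div_eq_mul_inv]; ring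
    rw [hnorm k, hnorm 0]
    calc Real.sqrt (v k ⬝ᵥ v k)
        ≤ Real.sqrt ((ρ/η) * (c ^ k * (v 0 ⬝ᵥ v 0))) := Real.sqrt_le_sqrt hdk
      _ = Real.sqrt (ρ/η) * Real.sqrt (c ^ k) * Real.sqrt (v 0 ⬝ᵥ v 0) := by
          rw [Real.sqrt_mul (by positivity : (0:ℝ) ≤ ρ/η),
            Real.sqrt_mul (pow_nonneg hc0.le k), mul_assoc]
  constructor
  · refine ⟨Real.sqrt (ρ/η), Real.sqrt_pos.mpr (div_pos hρ0 hη0), Real.sqrt c,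
      Real.sqrt_nonneg c, ?_, ?_⟩
    · calc Real.sqrt c < Real.sqrt 1 := Real.sqrt_lt_sqrt hc0.le hc1
        _ = 1 := Real.sqrt_one
    · intro x hx k
      have hsqpow : Real.sqrt (c ^ k) = (Real.sqrt c) ^ k := by
        induction k with
        | zero => simp
        | succ k ih => rw [pow_succ, pow_succ, Real.sqrt_mul (pow_nonneg hc0.le k), ih]
      have hm := main x hx k
      rwa [hsqpow] at hm
  · intro x hx k
    have hm := main x hx k
    rw [show (1:ℝ) - 1/ρ = c by rw [hc_def, one_div]]
    exact hm
end

section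
/- Suppose rank[X(k); U(k)] = n+m. Fix k and let S(k) ∈ ℝ^{n×n} be symmetric with S(k) ≻ 0, let S(k+1), O(k) be symmetric matrices and K(k) ∈ ℝ^{m×n} a gain, and let R(k) ≻ 0 be a symmetric weight with positive semidefinite square root R(k)^{1/2}. Then the two conditions (a) S(k+1) − I_n − (A(k)+B(k)K(k)) S(k) (A(k)+B(k)K(k))ᵀ ⪰ 0 and (b) O(k) − R(k)^{1/2} K(k) S(k) K(k)ᵀ R(k)^{1/2} ⪰ 0 hold if and only if there exists H(k) ∈ ℝ^{L×n} such that X(k)H(k) = S(k), U(k)H(k) = K(k)S(k), and the two block matrices [[S(k+1) − I_n, X(k+1)H(k)], [H(k)ᵀX(k+1)ᵀ, S(k)]] ⪰ 0 and [[O(k), R(k)^{1/2}U(k)H(k)], [H(k)ᵀU(k)ᵀR(k)^{1/2}, S(k)]] ⪰ 0 hold. In particular, under this correspondence the gain satisfies K(k) = U(k)H(k)S(k)^{−1}. -/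
open Matrix

lemma exists_right_solution' {n m L : ℕ}
    (X : Matrix (Fin n) (Fin L) ℝ) (U : Matrix (Fin m) (Fin L) ℝ)
    (hrank : (Matrix.fromRows X U).rank = n + m)
    (P : Matrix (Fin n) (Fin n) ℝ) (Q : Matrix (Fin m) (Fin n) ℝ) :
    ∃ H : Matrix (Fin L) (Fin n) ℝ, X * H = P ∧ U * H = Q := by
  set M := Matrix.fromRows X U with hM
  have hNrank : (M * Mᵀ).rank = n + m := by
    rw [Matrix.rank_self_mul_transpose]; exact hrank
  have hUnit : IsUnit (M * Mᵀ) := by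
    rw [← Matrix.mulVec_surjective_iff_isUnit]
    have htop : LinearMap.range (M * Mᵀ).mulVecLin = ⊤ := by
      apply Submodule.eq_top_of_finrank_eq
      rw [← Matrix.rank, hNrank]
      simp
    intro y
    obtain ⟨x, hx⟩ := LinearMap.range_eq_top.mp htop y
    exact ⟨x, hx⟩
  have hInv : M * (Mᵀ * (M * Mᵀ)⁻¹) = 1 := by
    rw [← Matrix.mul_assoc]
    exact Matrix.mul_nonsing_inv _ ((Matrix.isUnit_iff_isUnit_det _).mp hUnit)
  refine ⟨Mᵀ * (M * Mᵀ)⁻¹ * Matrix.fromRows P Q, ?_, ?_⟩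
  · have h : M * (Mᵀ * (M * Mᵀ)⁻¹ * Matrix.fromRows P Q) = Matrix.fromRows P Q := by
      rw [← Matrix.mul_assoc, hInv, Matrix.one_mul]
    rw [hM, Matrix.fromRows_mul] at h
    have h2 := congrArg Matrix.toRows₁ h
    rwa [Matrix.toRows₁_fromRows, Matrix.toRows₁_fromRows] at h2
  · have h : M * (Mᵀ * (M * Mᵀ)⁻¹ * Matrix.fromRows P Q) = Matrix.fromRows P Q := by
      rw [← Matrix.mul_assoc, hInv, Matrix.one_mul]
    rw [hM, Matrix.fromRows_mul] at h
    have h2 := congrArg Matrix.toRows₂ h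
    rwa [Matrix.toRows₂_fromRows, Matrix.toRows₂_fromRows] at h2

/-- Equivalence between the model-based LQR constraints and the
data-dependent LMI constraints at a fixed time step (core of Theorem 2 of the
paper). `X`, `U` are the data at time `k` and `Xp` the state data at `k+1`. -/
theorem LQR_constraints_data_equivalence
    {n m L : ℕ}
    (A : Matrix (Fin n) (Fin n) ℝ) (B : Matrix (Fin n) (Fin m) ℝ)
    (X : Matrix (Fin n) (Fin L) ℝ) (U : Matrix (Fin m) (Fin L) ℝ)
    (Xp : Matrix (Fin n) (Fin L) ℝ)
    (hdata : Xp = A * X + B * U)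
    (hrank : (Matrix.fromRows X U).rank = n + m)
    (S : Matrix (Fin n) (Fin n) ℝ) (hS : S.PosDef)
    (Sp : Matrix (Fin n) (Fin n) ℝ) (hSp : Sp.IsSymm)
    (O : Matrix (Fin m) (Fin m) ℝ) (hO : O.IsSymm)
    (K : Matrix (Fin m) (Fin n) ℝ)
    (R : Matrix (Fin m) (Fin m) ℝ) (hR : R.PosDef)
    (Rhalf : Matrix (Fin m) (Fin m) ℝ) (hRhalf : Rhalf.PosSemidef)
    (hRhalfSq : Rhalf * Rhalf = R) :
    ((Sp - 1 - (A + B * K) * S * (A + B * K)ᵀ).PosSemidef ∧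
      (O - Rhalf * K * S * Kᵀ * Rhalf).PosSemidef) ↔
    ∃ H : Matrix (Fin L) (Fin n) ℝ,
      X * H = S ∧ U * H = K * S ∧
      (Matrix.fromBlocks (Sp - 1) (Xp * H) (Hᵀ * Xpᵀ) S).PosSemidef ∧
      (Matrix.fromBlocks O (Rhalf * (U * H)) (Hᵀ * Uᵀ * Rhalf) S).PosSemidef ∧
      K = U * H * S⁻¹ := by
  classical
  have hSdet : IsUnit S.det := (Matrix.isUnit_iff_isUnit_det S).mp hS.isUnit
  haveI : Invertible S := S.invertibleOfIsUnitDet hSdet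
  have hSinv : S * S⁻¹ = 1 := Matrix.mul_nonsing_inv S hSdet
  have hSinv' : S⁻¹ * S = 1 := Matrix.nonsing_inv_mul S hSdet
  have hSsymm : Sᵀ = S := hS.isHermitian.eq
  have hRhsymm : Rhalfᵀ = Rhalf := hRhalf.isHermitian.eq
  -- The key algebraic identities, given `X*H = S` and `U*H = K*S`:
  have key : ∀ H : Matrix (Fin L) (Fin n) ℝ, X * H = S → U * H = K * S →
      (Xp * H = (A + B * K) * S ∧
       (Xp * H) * S⁻¹ * (Xp * H)ᵀ = (A + B * K) * S * (A + B * K)ᵀ ∧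
       (Rhalf * (U * H)) * S⁻¹ * (Rhalf * (U * H))ᵀ = Rhalf * K * S * Kᵀ * Rhalf) := by
    intro H hXH hUH
    have h1 : Xp * H = (A + B * K) * S := by
      rw [hdata, Matrix.add_mul, Matrix.mul_assoc, Matrix.mul_assoc, hXH, hUH,
        Matrix.add_mul, ← Matrix.mul_assoc]
    refine ⟨h1, ?_, ?_⟩
    · rw [h1]
      rw [Matrix.transpose_mul, hSsymm]
      calc (A + B * K) * S * S⁻¹ * (S * (A + B * K)ᵀ)
          = (A + B * K) * (S * S⁻¹ * S) * (A + B * K)ᵀ := by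
            simp only [Matrix.mul_assoc]
        _ = (A + B * K) * S * (A + B * K)ᵀ := by rw [hSinv, Matrix.one_mul]
    · rw [hUH]
      rw [Matrix.transpose_mul, Matrix.transpose_mul, hSsymm, hRhsymm]
      calc Rhalf * (K * S) * S⁻¹ * (S * Kᵀ * Rhalf)
          = Rhalf * K * (S * S⁻¹ * S) * (Kᵀ * Rhalf) := by
            simp only [Matrix.mul_assoc]
        _ = Rhalf * K * S * Kᵀ * Rhalf := by
            rw [hSinv, Matrix.one_mul, ← Matrix.mul_assoc]
  -- Schur complement equivalences, given `X*H = S` and `U*H = K*S`: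
  have schur : ∀ H : Matrix (Fin L) (Fin n) ℝ, X * H = S → U * H = K * S →
      (((Matrix.fromBlocks (Sp - 1) (Xp * H) (Hᵀ * Xpᵀ) S).PosSemidef ↔
        (Sp - 1 - (A + B * K) * S * (A + B * K)ᵀ).PosSemidef) ∧
       ((Matrix.fromBlocks O (Rhalf * (U * H)) (Hᵀ * Uᵀ * Rhalf) S).PosSemidef ↔
        (O - Rhalf * K * S * Kᵀ * Rhalf).PosSemidef)) := by
    intro H hXH hUH
    obtain ⟨h1, h2, h3⟩ := key H hXH hUH
    constructor
    · have hB : Hᵀ * Xpᵀ = (Xp * H)ᴴ := by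
        rw [Matrix.conjTranspose_eq_transpose_of_trivial, Matrix.transpose_mul]
      rw [hB]
      rw [Matrix.PosDef.fromBlocks₂₂ (Sp - 1) (Xp * H) hS]
      rw [Matrix.conjTranspose_eq_transpose_of_trivial, h2]
    · have hB : Hᵀ * Uᵀ * Rhalf = (Rhalf * (U * H))ᴴ := by
        rw [Matrix.conjTranspose_eq_transpose_of_trivial, Matrix.transpose_mul,
          Matrix.transpose_mul, hRhsymm, Matrix.mul_assoc]
      rw [hB]
      rw [Matrix.PosDef.fromBlocks₂₂ O (Rhalf * (U * H)) hS]
      rw [Matrix.conjTranspose_eq_transpose_of_trivial, h3]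
  constructor
  · rintro ⟨hc1, hc2⟩
    obtain ⟨H, hXH, hUH⟩ := exists_right_solution' X U hrank S (K * S)
    obtain ⟨hs1, hs2⟩ := schur H hXH hUH
    refine ⟨H, hXH, hUH, hs1.mpr hc1, hs2.mpr hc2, ?_⟩
    rw [hUH, Matrix.mul_assoc, hSinv, Matrix.mul_one]
  · rintro ⟨H, hXH, hUH, hb1, hb2, hK⟩
    obtain ⟨hs1, hs2⟩ := schur H hXH hUH
    exact ⟨hs1.mp hb1, hs2.mp hb2⟩
end

section
/- Suppose rank[Z(k); U(k)] = n+m for k = 0,…,T−1, and define R(k) = A(k)V(k) − V(k+1) − D(k). Then for every gain sequence K(k) ∈ ℝ^{m×n} (k = 0,…,T−1) there exists G(k) ∈ ℝ^{L×n} with Z(k)G(k) = I_n and U(k)G(k) = K(k); moreover, for every G(k) satisfying these two identities one has A(k) + B(k)K(k) = (Z(k+1) + R(k))G(k), for k = 0,…,T−1. -/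
open Matrix

lemma exists_right_inverse_of_full_rank {p q : Type*} [Fintype p] [Fintype q]
    [DecidableEq p] [DecidableEq q]
    (M : Matrix p q ℝ) (h : M.rank = Fintype.card p) :
    ∃ H : Matrix q p ℝ, M * H = 1 := by
  have hsurj : Function.Surjective M.mulVecLin := by
    rw [← LinearMap.range_eq_top]
    apply Submodule.eq_top_of_finrank_eq
    rw [Matrix.rank] at h
    simp [h]
  obtain ⟨f, hf⟩ := M.mulVecLin.exists_rightInverse_of_surjective (LinearMap.range_eq_top.2 hsurj)
  refine ⟨LinearMap.toMatrix' f, ?_⟩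
  apply Matrix.toLin'.injective
  rw [Matrix.toLin'_mul, Matrix.toLin'_toMatrix', Matrix.toLin'_apply', Matrix.toLin'_one]
  exact hf

/-- Data-driven representation of the closed-loop dynamics from
noisy data (equations (34)-(36) of the paper). -/
theorem noisy_data_driven_representation
    {n m L T : ℕ}
    (A : ℕ → Matrix (Fin n) (Fin n) ℝ) (B : ℕ → Matrix (Fin n) (Fin m) ℝ)
    (X V Z : ℕ → Matrix (Fin n) (Fin L) ℝ)
    (U : ℕ → Matrix (Fin m) (Fin L) ℝ)
    (D : ℕ → Matrix (Fin n) (Fin L) ℝ)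
    (hZ : ∀ k, Z k = X k + V k)
    (hdata : ∀ k < T, X (k + 1) = A k * X k + B k * U k + D k)
    (hrank : ∀ k < T, (Matrix.fromRows (Z k) (U k)).rank = n + m)
    (R : ℕ → Matrix (Fin n) (Fin L) ℝ)
    (hR : ∀ k < T, R k = A k * V k - V (k + 1) - D k) :
    ∀ K : ℕ → Matrix (Fin m) (Fin n) ℝ,
      (∀ k < T, ∃ G : Matrix (Fin L) (Fin n) ℝ,
        Z k * G = (1 : Matrix (Fin n) (Fin n) ℝ) ∧ U k * G = K k) ∧
      ∀ k < T, ∀ G : Matrix (Fin L) (Fin n) ℝ,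
        Z k * G = (1 : Matrix (Fin n) (Fin n) ℝ) → U k * G = K k →
        A k + B k * K k = (Z (k + 1) + R k) * G := by
  intro K
  constructor
  · intro k hk
    obtain ⟨H, hH⟩ := exists_right_inverse_of_full_rank (Matrix.fromRows (Z k) (U k))
      (by simpa using hrank k hk)
    refine ⟨H * Matrix.fromRows (1 : Matrix (Fin n) (Fin n) ℝ) (K k), ?_, ?_⟩
    · have := congrArg Matrix.toRows₁
        (show Matrix.fromRows (Z k) (U k) * (H * Matrix.fromRows (1 : Matrix (Fin n) (Fin n) ℝ) (K k))
            = Matrix.fromRows (1 : Matrix (Fin n) (Fin n) ℝ) (K k) by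
          rw [← Matrix.mul_assoc, hH, Matrix.one_mul])
      simpa [Matrix.fromRows_mul, Matrix.toRows₁_fromRows] using this
    · have := congrArg Matrix.toRows₂
        (show Matrix.fromRows (Z k) (U k) * (H * Matrix.fromRows (1 : Matrix (Fin n) (Fin n) ℝ) (K k))
            = Matrix.fromRows (1 : Matrix (Fin n) (Fin n) ℝ) (K k) by
          rw [← Matrix.mul_assoc, hH, Matrix.one_mul])
      simpa [Matrix.fromRows_mul, Matrix.toRows₂_fromRows] using this
  · intro k hk G hG1 hG2
    have hX := hdata k hk
    have hRk := hR k hk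
    have : (Z (k + 1) + R k) = A k * Z k + B k * U k := by
      rw [hZ (k + 1), hX, hRk, hZ k]
      ring_nf
      noncomm_ring [Matrix.mul_add]
    rw [this, Matrix.add_mul, Matrix.mul_assoc, Matrix.mul_assoc, hG1, hG2, Matrix.mul_one]
end

section
/- Suppose rank[Z(k); U(k)] = n+m for k = 0,…,T−1 and that R(k) = A(k)V(k) − V(k+1) − D(k) satisfies the quadratic bound Q_r(k) + S_r(k)R(k)ᵀ + R(k)S_r(k)ᵀ + R(k)R_r(k)R(k)ᵀ ⪰ 0 for k = 0,…,T−1, where Q_r(k) ∈ ℝ^{n×n}, S_r(k) ∈ ℝ^{n×L} and R_r(k) ∈ ℝ^{L×L} with R_r(k) ≺ 0. Let η ≥ 1 and ρ > η be finite constants, and suppose Y(k) ∈ ℝ^{L×n} and symmetric P(k) satisfy: (i) the 3×3 block matrix [[P(k+1) − I_n − Q_r(k), −S_r(k), Z(k+1)Y(k)], [−S_r(k)ᵀ, −R_r(k), Y(k)], [Y(k)ᵀZ(k+1)ᵀ, Y(k)ᵀ, P(k)]] ≻ 0 and Z(k)Y(k) = P(k) for k = 0,…,T−1; (ii) ηI_n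 ⪯ P(k) ⪯ ρI_n for k = 0,…,T. Let b be such that ‖B(j)‖ ≤ b for j = 0,…,T−1, and set K(k) = U(k)Y(k)P(k)^{−1}. Then every trajectory of x(k+1) = (A(k)+B(k)K(k))x(k) + B(k)K(k)v(k) + d(k) satisfies, for k = 0,…,T: ‖x(k)‖ ≤ √(ρ/η)·(1 − 1/ρ)^{k/2}·‖x(0)‖ + b·(Σ_{j=0}^{k−1} √(ρ/η)·(1 − 1/ρ)^{(k−1−j)/2}·‖K(j)‖)·|v|_{k−1} + (Σ_{j=0}^{k−1} √(ρ/η)·(1 − 1/ρ)^{(k−1−j)/2})·|d|_{k−1}, with |v|_{k−1} = sup{‖v(j)‖ : 0 ≤ j ≤ k−1} and |d|_{k−1} = sup{‖d(j)‖ : 0 ≤ j ≤ k−1}. -/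
open Matrix

/-!
Along the horizon, `V_k(x) = √(xᵀ P(k)⁻¹ x)` is a time-varying Lyapunov function. The data
identity `A Z(k) + B U(k) = Z(k+1) + R(k)` together with `Z(k) Y(k) = P(k)` writes the
closed-loop matrix as `M = (Z(k+1) + R(k)) Y(k) P(k)⁻¹`. A Schur complement of the LMI,
congruence with `[I  R(k)]` and the quadratic noise bound give `M P(k) Mᵀ ⪯ P(k+1) - I`, and
with `P(k+1) ⪯ ρ I` and a second Schur complement this becomes
`Mᵀ P(k+1)⁻¹ M ⪯ (1 - 1/ρ) P(k)⁻¹`. Hence `V_{k+1}(x(k+1)) ≤ √(1 - 1/ρ) V_k(x(k)) + ‖w(k)‖/√η`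
for the disturbance `w = B K v + d`; unrolling this recursion and comparing `V_k` with the
Euclidean norm through `η I ⪯ P(k) ⪯ ρ I` gives the bound.
-/

namespace Matrix

theorem inv_smul_of_ne_zero {K ι : Type*} [Field K] [Fintype ι] [DecidableEq ι]
    {A : Matrix ι ι K} {c : K} (hc : c ≠ 0) (hA : IsUnit A.det) : (c • A)⁻¹ = c⁻¹ • A⁻¹ :=
  inv_eq_left_inv (by simp [hc, smul_smul, nonsing_inv_mul _ hA])

theorem mul_inv_mul_mul_transpose_of_isSymm {R ι κ : Type*} [CommRing R] [Fintype κ]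
    [DecidableEq κ] {P : Matrix κ κ R} (hP : P.IsSymm) (hPu : IsUnit P.det)
    (N : Matrix ι κ R) : N * P⁻¹ * P * (N * P⁻¹)ᵀ = N * P⁻¹ * Nᵀ := by
  rw [transpose_mul, transpose_nonsing_inv, hP.eq]
  simp only [Matrix.mul_assoc, mul_nonsing_inv_cancel_left _ _ hPu]

section PosDef

variable {K ι κ : Type*} [Field K] [PartialOrder K] [StarRing K] [StarOrderedRing K]
  [Fintype ι] [Fintype κ] [DecidableEq ι] [DecidableEq κ]

theorem PosDef.posSemidef_sub_mul_inv_mul_conjTranspose_iff {A : Matrix ι ι K}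
    {D : Matrix κ κ K} (hA : A.PosDef) (hD : D.PosDef) (B : Matrix ι κ K) :
    (A - B * D⁻¹ * Bᴴ).PosSemidef ↔ (D - Bᴴ * A⁻¹ * B).PosSemidef := by
  have := hA.isUnit.invertible
  have := hD.isUnit.invertible
  rw [← PosDef.fromBlocks₂₂ A B hD, PosDef.fromBlocks₁₁ B D hA]

theorem PosDef.posSemidef_inv_sub_conjTranspose_mul_inv_mul {P₀ : Matrix κ κ K}
    {P₁ : Matrix ι ι K} (hP₀ : P₀.PosDef) (hP₁ : P₁.PosDef) {M : Matrix ι κ K}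
    (h : (P₁ - M * P₀ * Mᴴ).PosSemidef) : (P₀⁻¹ - Mᴴ * P₁⁻¹ * M).PosSemidef := by
  rwa [← hP₁.posSemidef_sub_mul_inv_mul_conjTranspose_iff hP₀.inv,
    nonsing_inv_nonsing_inv _ ((isUnit_iff_isUnit_det _).mp hP₀.isUnit)]

theorem PosDef.posSemidef_inv_sub_inv {A B : Matrix ι ι K} (hA : A.PosDef) (hB : B.PosDef)
    (h : (B - A).PosSemidef) : (A⁻¹ - B⁻¹).PosSemidef := by
  simpa using hA.posSemidef_inv_sub_conjTranspose_mul_inv_mul hB (M := 1) (by simpa using h)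

omit [Fintype ι] in
theorem posDef_of_posSemidef_sub_smul_one {P : Matrix ι ι K} {η : K} (hη : 0 < η)
    (h : (P - η • 1).PosSemidef) : P.PosDef := by
  simpa using PosDef.posSemidef_add h (PosDef.one.smul hη)

end PosDef

end Matrix

section QuadNorm

variable {ι κ : Type*} [Fintype ι] [Fintype κ]

noncomputable def quadNorm (W : Matrix ι ι ℝ) (x : ι → ℝ) : ℝ := √(x ⬝ᵥ (W *ᵥ x))

theorem quadNorm_add_le {W : Matrix ι ι ℝ} (hW : W.PosSemidef) (x y : ι → ℝ) :
    quadNorm W (x + y) ≤ quadNorm W x + quadNorm W y := by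
  have h (z : ι → ℝ) : @norm _ (W.toSeminormedAddCommGroup hW).toNorm z = quadNorm W z := by
    rw [quadNorm, dotProduct_comm]
    -- the norm of `W.toSeminormedAddCommGroup hW` is built on a private structure
    with_unfolding_all rfl
  simpa only [h] using @norm_add_le _ (W.toSeminormedAddCommGroup hW).toSeminormedAddGroup x y

theorem quadNorm_le_quadNorm {W₁ W₂ : Matrix ι ι ℝ} (h : (W₂ - W₁).PosSemidef) (x : ι → ℝ) :
    quadNorm W₁ x ≤ quadNorm W₂ x := by
  have := h.dotProduct_mulVec_nonneg x
  simp only [star_trivial, sub_mulVec, dotProduct_sub, sub_nonneg] at this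
  exact Real.sqrt_le_sqrt this

theorem quadNorm_smul {c : ℝ} (hc : 0 ≤ c) (W : Matrix ι ι ℝ) (x : ι → ℝ) :
    quadNorm (c • W) x = √c * quadNorm W x := by
  rw [quadNorm, quadNorm, smul_mulVec, dotProduct_smul, smul_eq_mul, Real.sqrt_mul hc]

theorem quadNorm_mulVec (W : Matrix ι ι ℝ) (M : Matrix ι κ ℝ) (x : κ → ℝ) :
    quadNorm W (M *ᵥ x) = quadNorm (Mᵀ * W * M) x := by
  rw [quadNorm, quadNorm, ← mulVec_mulVec, ← mulVec_mulVec, dotProduct_mulVec x,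
    vecMul_transpose]

variable [DecidableEq ι]

theorem quadNorm_one (x : EuclideanSpace ℝ ι) : quadNorm 1 x.ofLp = ‖x‖ := by
  rw [quadNorm, one_mulVec, norm_eq_sqrt_real_inner, EuclideanSpace.inner_eq_star_dotProduct,
    star_trivial]

theorem quadNorm_inv_le_norm_div_sqrt {P : Matrix ι ι ℝ} {η : ℝ} (hη : 0 < η)
    (hP : (P - η • 1).PosSemidef) (x : EuclideanSpace ℝ ι) : quadNorm P⁻¹ x.ofLp ≤ ‖x‖ / √η := by
  have h := (PosDef.one.smul hη).posSemidef_inv_sub_inv (posDef_of_posSemidef_sub_smul_one hη hP) hP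
  rw [inv_smul_of_ne_zero hη.ne' (by simp), inv_one] at h
  calc quadNorm P⁻¹ x.ofLp ≤ quadNorm (η⁻¹ • 1) x.ofLp := quadNorm_le_quadNorm h _
    _ = ‖x‖ / √η := by rw [quadNorm_smul (by positivity), quadNorm_one, Real.sqrt_inv,
        inv_mul_eq_div]

theorem norm_le_sqrt_mul_quadNorm_inv {P : Matrix ι ι ℝ} {ρ : ℝ} (hρ : 0 < ρ) (hP : P.PosDef)
    (hPρ : (ρ • 1 - P).PosSemidef) (x : EuclideanSpace ℝ ι) :
    ‖x‖ ≤ √ρ * quadNorm P⁻¹ x.ofLp := by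
  have h := hP.posSemidef_inv_sub_inv (PosDef.one.smul hρ) hPρ
  rw [inv_smul_of_ne_zero hρ.ne' (by simp), inv_one] at h
  have hle := quadNorm_le_quadNorm h x.ofLp
  rw [quadNorm_smul (by positivity), quadNorm_one, Real.sqrt_inv, inv_mul_le_iff₀ (by positivity)]
    at hle
  exact hle

end QuadNorm

theorem ofLp_matVec {n m : ℕ} (M : Matrix (Fin n) (Fin m) ℝ) (v : EuclideanSpace ℝ (Fin m)) :
    (matVec M v).ofLp = M *ᵥ v.ofLp :=
  rfl

theorem matVec_mul {n m p : ℕ} (M : Matrix (Fin n) (Fin m) ℝ) (N : Matrix (Fin m) (Fin p) ℝ)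
    (v : EuclideanSpace ℝ (Fin p)) : matVec (M * N) v = matVec M (matVec N v) := by
  ext i
  simp [matVec, ← mulVec_mulVec]

theorem norm_matVec_le {n m : ℕ} (M : Matrix (Fin n) (Fin m) ℝ) (v : EuclideanSpace ℝ (Fin m)) :
    ‖matVec M v‖ ≤ opNorm2 M * ‖v‖ :=
  (LinearMap.toContinuousLinearMap (toEuclideanLin M)).le_opNorm v

theorem le_pow_mul_add_sum_of_le_mul_add {e g : ℕ → ℝ} {a : ℝ} {T : ℕ} (ha : 0 ≤ a)
    (h : ∀ k < T, e (k + 1) ≤ a * e k + g k) :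
    ∀ k ≤ T, e k ≤ a ^ k * e 0 + ∑ j ∈ Finset.range k, a ^ (k - 1 - j) * g j := by
  intro k hk
  induction k with
  | zero => simp
  | succ k ih =>
    calc e (k + 1) ≤ a * e k + g k := h k hk
      _ ≤ a * (a ^ k * e 0 + ∑ j ∈ Finset.range k, a ^ (k - 1 - j) * g j) + g k := by
        gcongr; exact ih (by omega)
      _ = a ^ (k + 1) * e 0 + ∑ j ∈ Finset.range (k + 1), a ^ (k + 1 - 1 - j) * g j := by
        rw [Finset.sum_range_succ, mul_add, Finset.mul_sum, pow_succ']
        have hexp : ∀ j ∈ Finset.range k, a * (a ^ (k - 1 - j) * g j) = a ^ (k - j) * g j :=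
          fun j hj => by
            rw [← mul_assoc, ← pow_succ', show k - 1 - j + 1 = k - j by
              have := Finset.mem_range.mp hj; omega]
        rw [Finset.sum_congr rfl hexp]
        simp only [add_tsub_cancel_right, tsub_self, pow_zero, one_mul]
        ring

theorem norm_le_of_quadNorm_contraction {n T : ℕ} {η ρ : ℝ} (hη : 0 < η) (hρ : 1 ≤ ρ)
    {P M : ℕ → Matrix (Fin n) (Fin n) ℝ} {x w : ℕ → EuclideanSpace ℝ (Fin n)}
    (hPlow : ∀ k ≤ T, (P k - η • 1).PosSemidef) (hPhigh : ∀ k ≤ T, (ρ • 1 - P k).PosSemidef)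
    (hM : ∀ k < T, ((1 - 1 / ρ) • (P k)⁻¹ - (M k)ᵀ * (P (k + 1))⁻¹ * M k).PosSemidef)
    (hx : ∀ k < T, x (k + 1) = matVec (M k) (x k) + w k) (k : ℕ) (hk : k ≤ T) :
    ‖x k‖ ≤ √(ρ / η) * √((1 - 1 / ρ) ^ k) * ‖x 0‖
      + ∑ j ∈ Finset.range k, √(ρ / η) * √((1 - 1 / ρ) ^ (k - 1 - j)) * ‖w j‖ := by
  set c := 1 - 1 / ρ
  have hc : 0 ≤ c := sub_nonneg.mpr ((div_le_one (by positivity)).mpr hρ)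
  have hP (j : ℕ) (hj : j ≤ T) : (P j).PosDef := posDef_of_posSemidef_sub_smul_one hη (hPlow j hj)
  set e : ℕ → ℝ := fun j => quadNorm (P j)⁻¹ (x j).ofLp
  have hstep : ∀ j < T, e (j + 1) ≤ √c * e j + ‖w j‖ / √η := by
    intro j hj
    have hMx : quadNorm (P (j + 1))⁻¹ (M j *ᵥ (x j).ofLp) ≤ √c * e j := by
      rw [quadNorm_mulVec, ← quadNorm_smul hc]
      exact quadNorm_le_quadNorm (hM j hj) _
    calc e (j + 1) = quadNorm (P (j + 1))⁻¹ (M j *ᵥ (x j).ofLp + (w j).ofLp) := by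
          simp only [e, hx j hj, WithLp.ofLp_add, ofLp_matVec]
      _ ≤ _ := quadNorm_add_le (hP (j + 1) hj).inv.posSemidef _ _
      _ ≤ √c * e j + ‖w j‖ / √η :=
        add_le_add hMx (quadNorm_inv_le_norm_div_sqrt hη (hPlow (j + 1) hj) _)
  have hsqrt_pow (m : ℕ) : √(c ^ m) = √c ^ m := by
    induction m <;> simp [pow_succ, Real.sqrt_mul' _ hc, *]
  calc ‖x k‖ ≤ √ρ * e k := norm_le_sqrt_mul_quadNorm_inv (by positivity) (hP k hk) (hPhigh k hk) _
    _ ≤ √ρ * (√c ^ k * e 0 + ∑ j ∈ Finset.range k, √c ^ (k - 1 - j) * (‖w j‖ / √η)) := by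
      gcongr
      exact le_pow_mul_add_sum_of_le_mul_add (Real.sqrt_nonneg c) hstep k hk
    _ ≤ √ρ * (√c ^ k * (‖x 0‖ / √η) + ∑ j ∈ Finset.range k, √c ^ (k - 1 - j) * (‖w j‖ / √η)) := by
      gcongr
      exact quadNorm_inv_le_norm_div_sqrt hη (hPlow 0 (Nat.zero_le T)) _
    _ = _ := by
      simp only [hsqrt_pow, Real.sqrt_div' _ hη.le, mul_add, Finset.mul_sum]
      congr 1
      · ring
      · exact Finset.sum_congr rfl fun j _ => by ring

section Dissipation

variable {ι κ : Type*} [Fintype ι] [Fintype κ] [DecidableEq ι] [DecidableEq κ]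

theorem posSemidef_smul_inv_sub_of_dissipation {ρ : ℝ} (hρ : 1 < ρ) {P₀ : Matrix κ κ ℝ}
    {P₁ : Matrix ι ι ℝ} {M : Matrix ι κ ℝ} (hP₀ : P₀.PosDef) (hP₁ : P₁.PosDef)
    (h : (P₁ - 1 - M * P₀ * Mᵀ).PosSemidef) (hP₁ρ : (ρ • 1 - P₁).PosSemidef) :
    ((1 - 1 / ρ) • P₀⁻¹ - Mᵀ * P₁⁻¹ * M).PosSemidef := by
  have hρ0 : 0 < ρ := by linarith
  set c := 1 - 1 / ρ
  have hc : 0 < c := sub_pos.mpr ((div_lt_one hρ0).mpr hρ)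
  have hdecay : (c • P₁ - M * P₀ * Mᵀ).PosSemidef := by
    have e : c • P₁ - M * P₀ * Mᵀ = (P₁ - 1 - M * P₀ * Mᵀ) + ρ⁻¹ • (ρ • 1 - P₁) := by
      rw [smul_sub, smul_smul, inv_mul_cancel₀ hρ0.ne', one_smul]
      module
    exact e ▸ h.add (hP₁ρ.smul (by positivity))
  have h' := hP₀.posSemidef_inv_sub_conjTranspose_mul_inv_mul (hP₁.smul hc) (M := M)
    (by rwa [conjTranspose_eq_transpose_of_trivial])
  rw [conjTranspose_eq_transpose_of_trivial,
    inv_smul_of_ne_zero hc.ne' ((isUnit_iff_isUnit_det _).mp hP₁.isUnit)] at h'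
  have e : c • P₀⁻¹ - Mᵀ * P₁⁻¹ * M = c • (P₀⁻¹ - Mᵀ * (c⁻¹ • P₁⁻¹) * M) := by
    simp [Matrix.mul_smul, Matrix.smul_mul, smul_sub, smul_smul, mul_inv_cancel₀ hc.ne']
  exact e ▸ h'.smul hc.le

omit [DecidableEq κ] in
theorem posSemidef_sub_one_sub_of_lmi {P₀ P₁ Q : Matrix ι ι ℝ} {Z₁ R S : Matrix ι κ ℝ}
    {Rr : Matrix κ κ ℝ} {Y : Matrix κ ι ℝ} (hP₀ : P₀.PosDef)
    (hLMI : (fromBlocks (fromBlocks (P₁ - 1 - Q) (-S) (-Sᵀ) (-Rr))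
      (fromRows (Z₁ * Y) Y) (fromCols (Yᵀ * Z₁ᵀ) Yᵀ) P₀).PosDef)
    (hnoise : (Q + S * Rᵀ + R * Sᵀ + R * Rr * Rᵀ).PosSemidef) :
    (P₁ - 1 - (Z₁ + R) * Y * P₀⁻¹ * ((Z₁ + R) * Y)ᵀ).PosSemidef := by
  have := hP₀.isUnit.invertible
  set Top := fromBlocks (P₁ - 1 - Q) (-S) (-Sᵀ) (-Rr)
  set W := fromRows (Z₁ * Y) Y
  set C : Matrix ι (ι ⊕ κ) ℝ := fromCols 1 R
  have hW : fromCols (Yᵀ * Z₁ᵀ) Yᵀ = Wᴴ := by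
    simp [W, conjTranspose_eq_transpose_of_trivial, transpose_fromRows]
  have hschur : (Top - W * P₀⁻¹ * Wᴴ).PosSemidef :=
    (PosDef.fromBlocks₂₂ _ _ hP₀).mp (hW ▸ hLMI).posSemidef
  have hCW : C * W = (Z₁ + R) * Y := by
    rw [fromCols_mul_fromRows, Matrix.one_mul, Matrix.add_mul]
  have hCTop : C * Top * Cᴴ = P₁ - 1 - (Q + S * Rᵀ + R * Sᵀ + R * Rr * Rᵀ) := by
    rw [conjTranspose_eq_transpose_of_trivial, transpose_fromCols, fromCols_mul_fromBlocks,
      fromCols_mul_fromRows]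
    simp only [Matrix.one_mul, transpose_one, Matrix.mul_one, Matrix.mul_neg, Matrix.neg_mul,
      Matrix.add_mul, Matrix.mul_assoc]
    abel
  have hcongr : C * (Top - W * P₀⁻¹ * Wᴴ) * Cᴴ + (Q + S * Rᵀ + R * Sᵀ + R * Rr * Rᵀ)
      = P₁ - 1 - (Z₁ + R) * Y * P₀⁻¹ * ((Z₁ + R) * Y)ᵀ := by
    rw [Matrix.mul_sub, Matrix.sub_mul, hCTop, ← hCW,
      ← conjTranspose_eq_transpose_of_trivial (C * W), conjTranspose_mul]
    simp only [Matrix.mul_assoc]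
    abel
  exact hcongr ▸ (hschur.mul_mul_conjTranspose_same C).add hnoise

end Dissipation

theorem closedLoop_eq_of_noisy_data {ι μ κ : Type*} [Fintype ι] [Fintype μ] [Fintype κ]
    [DecidableEq ι] {A P : Matrix ι ι ℝ} {B : Matrix ι μ ℝ} {X₀ X₁ V₀ V₁ Z₀ Z₁ D R : Matrix ι κ ℝ}
    {U : Matrix μ κ ℝ} {Y : Matrix κ ι ℝ} {K : Matrix μ ι ℝ}
    (hZ₀ : Z₀ = X₀ + V₀) (hZ₁ : Z₁ = X₁ + V₁) (hdata : X₁ = A * X₀ + B * U + D)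
    (hR : R = A * V₀ - V₁ - D) (hZY : Z₀ * Y = P) (hP : IsUnit P.det) (hK : K = U * Y * P⁻¹) :
    A + B * K = (Z₁ + R) * (Y * P⁻¹) := by
  have hZR : Z₁ + R = A * Z₀ + B * U := by
    rw [hZ₁, hR, hdata, hZ₀, Matrix.mul_add]
    abel
  rw [hZR, Matrix.add_mul, Matrix.mul_assoc A, ← Matrix.mul_assoc Z₀, hZY, mul_nonsing_inv _ hP,
    Matrix.mul_one, hK]
  simp only [Matrix.mul_assoc]

theorem closedLoop_contraction_of_lmi {ι μ κ : Type*} [Fintype ι] [Fintype μ] [Fintype κ]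
    [DecidableEq ι] {A P₀ P₁ Q : Matrix ι ι ℝ} {B : Matrix ι μ ℝ}
    {X₀ X₁ V₀ V₁ Z₀ Z₁ D R S : Matrix ι κ ℝ} {U : Matrix μ κ ℝ} {Rr : Matrix κ κ ℝ}
    {Y : Matrix κ ι ℝ} {K : Matrix μ ι ℝ} {ρ : ℝ} (hρ : 1 < ρ)
    (hZ₀ : Z₀ = X₀ + V₀) (hZ₁ : Z₁ = X₁ + V₁) (hdata : X₁ = A * X₀ + B * U + D)
    (hR : R = A * V₀ - V₁ - D) (hnoise : (Q + S * Rᵀ + R * Sᵀ + R * Rr * Rᵀ).PosSemidef)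
    (hP₀ : P₀.PosDef) (hP₁ : P₁.PosDef) (hP₀symm : P₀.IsSymm)
    (hLMI : (fromBlocks (fromBlocks (P₁ - 1 - Q) (-S) (-Sᵀ) (-Rr))
      (fromRows (Z₁ * Y) Y) (fromCols (Yᵀ * Z₁ᵀ) Yᵀ) P₀).PosDef)
    (hZY : Z₀ * Y = P₀) (hP₁ρ : (ρ • 1 - P₁).PosSemidef) (hK : K = U * Y * P₀⁻¹) :
    ((1 - 1 / ρ) • P₀⁻¹ - (A + B * K)ᵀ * P₁⁻¹ * (A + B * K)).PosSemidef := by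
  have hP₀u : IsUnit P₀.det := (isUnit_iff_isUnit_det _).mp hP₀.isUnit
  rw [closedLoop_eq_of_noisy_data hZ₀ hZ₁ hdata hR hZY hP₀u hK]
  refine posSemidef_smul_inv_sub_of_dissipation hρ hP₀ hP₁ ?_ hP₁ρ
  rw [← Matrix.mul_assoc, mul_inv_mul_mul_transpose_of_isSymm hP₀symm hP₀u]
  exact posSemidef_sub_one_sub_of_lmi hP₀ hLMI hnoise

theorem norm_matVec_mul_add_le {n m : ℕ} {B : Matrix (Fin n) (Fin m) ℝ} {b : ℝ}
    (hB : opNorm2 B ≤ b) (K : Matrix (Fin m) (Fin n) ℝ) {v d : EuclideanSpace ℝ (Fin n)}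
    {Γv Γd : ℝ} (hv : ‖v‖ ≤ Γv) (hd : ‖d‖ ≤ Γd) :
    ‖matVec (B * K) v + d‖ ≤ b * opNorm2 K * Γv + Γd := by
  have hb : 0 ≤ b := (norm_nonneg _).trans hB
  calc ‖matVec (B * K) v + d‖ ≤ opNorm2 B * (opNorm2 K * ‖v‖) + ‖d‖ := by
        rw [matVec_mul]
        refine (norm_add_le _ _).trans (add_le_add_left ?_ _)
        exact (norm_matVec_le _ _).trans
          (mul_le_mul_of_nonneg_left (norm_matVec_le _ _) (norm_nonneg _))
    _ ≤ b * opNorm2 K * Γv + Γd := by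
        have : 0 ≤ opNorm2 K := norm_nonneg _
        rw [← mul_assoc]
        gcongr

theorem robust_bounded_trajectories_noisy_data_general
    {n m L T : ℕ}
    (A : ℕ → Matrix (Fin n) (Fin n) ℝ) (B : ℕ → Matrix (Fin n) (Fin m) ℝ)
    (X V Z : ℕ → Matrix (Fin n) (Fin L) ℝ)
    (U : ℕ → Matrix (Fin m) (Fin L) ℝ)
    (D : ℕ → Matrix (Fin n) (Fin L) ℝ)
    (hZ : ∀ k, Z k = X k + V k)
    (hdata : ∀ k < T, X (k + 1) = A k * X k + B k * U k + D k)
    (R : ℕ → Matrix (Fin n) (Fin L) ℝ)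
    (hR : ∀ k < T, R k = A k * V k - V (k + 1) - D k)
    (Qr : ℕ → Matrix (Fin n) (Fin n) ℝ) (Sr : ℕ → Matrix (Fin n) (Fin L) ℝ)
    (Rr : ℕ → Matrix (Fin L) (Fin L) ℝ)
    (hnoise : ∀ k < T,
      (Qr k + Sr k * (R k)ᵀ + R k * (Sr k)ᵀ + R k * Rr k * (R k)ᵀ).PosSemidef)
    (η ρ : ℝ) (hη : 1 ≤ η) (hρ : η < ρ)
    (Y : ℕ → Matrix (Fin L) (Fin n) ℝ) (P : ℕ → Matrix (Fin n) (Fin n) ℝ)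
    (hPsymm : ∀ k ≤ T, (P k).IsSymm)
    (hLMI : ∀ k < T,
      (Matrix.fromBlocks
        (Matrix.fromBlocks (P (k + 1) - 1 - Qr k) (-(Sr k))
          (-((Sr k)ᵀ)) (-(Rr k)))
        (Matrix.fromRows (Z (k + 1) * Y k) (Y k))
        (Matrix.fromCols ((Y k)ᵀ * (Z (k + 1))ᵀ) ((Y k)ᵀ))
        (P k)).PosDef)
    (heq : ∀ k < T, Z k * Y k = P k)
    (hPlow : ∀ k ≤ T, (P k - η • (1 : Matrix (Fin n) (Fin n) ℝ)).PosSemidef)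
    (hPhigh : ∀ k ≤ T, (ρ • (1 : Matrix (Fin n) (Fin n) ℝ) - P k).PosSemidef)
    (b : ℝ) (hb : ∀ j < T, opNorm2 (B j) ≤ b)
    (K : ℕ → Matrix (Fin m) (Fin n) ℝ)
    (hK : ∀ k < T, K k = U k * Y k * (P k)⁻¹) :
    ∀ (x v d : ℕ → EuclideanSpace ℝ (Fin n)),
      (∀ k < T, x (k + 1) =
        matVec (A k + B k * K k) (x k) + matVec (B k * K k) (v k) + d k) →
      ∀ k ≤ T,
        ‖x k‖ ≤ Real.sqrt (ρ / η) * Real.sqrt ((1 - 1 / ρ) ^ k) * ‖x 0‖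
          + b * (∑ j ∈ Finset.range k,
              Real.sqrt (ρ / η) * Real.sqrt ((1 - 1 / ρ) ^ (k - 1 - j)) *
                opNorm2 (K j)) * (⨆ j : Fin k, ‖v (j : ℕ)‖)
          + (∑ j ∈ Finset.range k,
              Real.sqrt (ρ / η) * Real.sqrt ((1 - 1 / ρ) ^ (k - 1 - j))) *
              (⨆ j : Fin k, ‖d (j : ℕ)‖) := by
  intro x v d hx k hk
  have hη0 : 0 < η := by linarith
  have hP (j : ℕ) (hj : j ≤ T) : (P j).PosDef := posDef_of_posSemidef_sub_smul_one hη0 (hPlow j hj)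
  have hcontr (j : ℕ) (hj : j < T) :=
    closedLoop_contraction_of_lmi (by linarith) (hZ j) (hZ (j + 1)) (hdata j hj) (hR j hj)
      (hnoise j hj) (hP j hj.le) (hP (j + 1) hj) (hPsymm j hj.le) (hLMI j hj) (heq j hj)
      (hPhigh (j + 1) hj) (hK j hj)
  refine (norm_le_of_quadNorm_contraction hη0 (by linarith) hPlow hPhigh hcontr
    (w := fun j => matVec (B j * K j) (v j) + d j) (fun j hj => (hx j hj).trans (add_assoc _ _ _))
    k hk).trans ?_
  have hw (j : ℕ) (hj : j ∈ Finset.range k) : ‖matVec (B j * K j) (v j) + d j‖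
      ≤ b * opNorm2 (K j) * (⨆ i : Fin k, ‖v i‖) + ⨆ i : Fin k, ‖d i‖ := by
    have hjk := Finset.mem_range.mp hj
    exact norm_matVec_mul_add_le (hb j (by omega)) (K j)
      (le_ciSup (f := fun i : Fin k => ‖v i‖) (Set.finite_range _).bddAbove ⟨j, hjk⟩)
      (le_ciSup (f := fun i : Fin k => ‖d i‖) (Set.finite_range _).bddAbove ⟨j, hjk⟩)
  rw [add_assoc]
  refine add_le_add le_rfl ((Finset.sum_le_sum fun j hj =>
    mul_le_mul_of_nonneg_left (hw j hj) (by positivity)).trans_eq ?_)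
  rw [Finset.mul_sum, Finset.sum_mul, Finset.sum_mul, ← Finset.sum_add_distrib]
  exact Finset.sum_congr rfl fun j _ => by ring

/-- Robust trajectory boundedness from noisy data under a general
quadratic noise bound (Theorem 3 of the paper). -/
theorem robust_bounded_trajectories_noisy_data
    {n m L T : ℕ}
    (A : ℕ → Matrix (Fin n) (Fin n) ℝ) (B : ℕ → Matrix (Fin n) (Fin m) ℝ)
    (X V Z : ℕ → Matrix (Fin n) (Fin L) ℝ)
    (U : ℕ → Matrix (Fin m) (Fin L) ℝ)
    (D : ℕ → Matrix (Fin n) (Fin L) ℝ)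
    (hZ : ∀ k, Z k = X k + V k)
    (hdata : ∀ k < T, X (k + 1) = A k * X k + B k * U k + D k)
    (hrank : ∀ k < T, (Matrix.fromRows (Z k) (U k)).rank = n + m)
    (R : ℕ → Matrix (Fin n) (Fin L) ℝ)
    (hR : ∀ k < T, R k = A k * V k - V (k + 1) - D k)
    (Qr : ℕ → Matrix (Fin n) (Fin n) ℝ) (Sr : ℕ → Matrix (Fin n) (Fin L) ℝ)
    (Rr : ℕ → Matrix (Fin L) (Fin L) ℝ)
    (hRr : ∀ k < T, (-(Rr k)).PosDef)
    (hnoise : ∀ k < T,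
      (Qr k + Sr k * (R k)ᵀ + R k * (Sr k)ᵀ + R k * Rr k * (R k)ᵀ).PosSemidef)
    (η ρ : ℝ) (hη : 1 ≤ η) (hρ : η < ρ)
    (Y : ℕ → Matrix (Fin L) (Fin n) ℝ) (P : ℕ → Matrix (Fin n) (Fin n) ℝ)
    (hPsymm : ∀ k ≤ T, (P k).IsSymm)
    (hLMI : ∀ k < T,
      (Matrix.fromBlocks
        (Matrix.fromBlocks (P (k + 1) - 1 - Qr k) (-(Sr k))
          (-((Sr k)ᵀ)) (-(Rr k)))
        (Matrix.fromRows (Z (k + 1) * Y k) (Y k))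
        (Matrix.fromCols ((Y k)ᵀ * (Z (k + 1))ᵀ) ((Y k)ᵀ))
        (P k)).PosDef)
    (heq : ∀ k < T, Z k * Y k = P k)
    (hPlow : ∀ k ≤ T, (P k - η • (1 : Matrix (Fin n) (Fin n) ℝ)).PosSemidef)
    (hPhigh : ∀ k ≤ T, (ρ • (1 : Matrix (Fin n) (Fin n) ℝ) - P k).PosSemidef)
    (b : ℝ) (hb : ∀ j < T, opNorm2 (B j) ≤ b)
    (K : ℕ → Matrix (Fin m) (Fin n) ℝ)
    (hK : ∀ k < T, K k = U k * Y k * (P k)⁻¹) :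
    ∀ (x v d : ℕ → EuclideanSpace ℝ (Fin n)),
      (∀ k < T, x (k + 1) =
        matVec (A k + B k * K k) (x k) + matVec (B k * K k) (v k) + d k) →
      ∀ k ≤ T,
        ‖x k‖ ≤ Real.sqrt (ρ / η) * Real.sqrt ((1 - 1 / ρ) ^ k) * ‖x 0‖
          + b * (∑ j ∈ Finset.range k,
              Real.sqrt (ρ / η) * Real.sqrt ((1 - 1 / ρ) ^ (k - 1 - j)) *
                opNorm2 (K j)) * (⨆ j : Fin k, ‖v (j : ℕ)‖)
          + (∑ j ∈ Finset.range k,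
              Real.sqrt (ρ / η) * Real.sqrt ((1 - 1 / ρ) ^ (k - 1 - j))) *
              (⨆ j : Fin k, ‖d (j : ℕ)‖) :=
  robust_bounded_trajectories_noisy_data_general A B X V Z U D hZ hdata R hR Qr Sr Rr hnoise η ρ hη
    hρ Y P hPsymm hLMI heq hPlow hPhigh b hb K hK
end
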